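/- arXiv:2502.18096 — 4 statements merged into one kernel-verified Lean document; each statement's English description precedes it below -/
import Mathlib

section
/- In the Sergeev superalgebra S_n, the elements s_a = (1/√2) t_a (c_{a+1} − c_a), a = 1,…,n−1, satisfy the symmetric group relations s_a² = 1, s_a s_{a+1} s_a = s_{a+1} s_a s_{a+1}, and s_a s_b = s_b s_a for |a−b| > 1, together with the semidirect-product relations s_a c_a = c_{a+1} s_a, s_a c_{a+1} = c_a s_a, and s_a c_b = c_b s_a for b ≠ a, a+1. -/
open scoped Classical

noncomputable section

/-- Generators of the Sergeev superalgebra: `T a` for `1 ≤ a ≤ n-1`, `C a` for `1 ≤ a ≤ n`. -/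
inductive SGen (n : ℕ) : Type
  | T : {a : ℕ // 1 ≤ a ∧ a < n} → SGen n
  | C : {a : ℕ // 1 ≤ a ∧ a ≤ n} → SGen n

/-- The generator `t_a` in the free algebra (junk value `0` outside the valid range). -/
def tf (n a : ℕ) : FreeAlgebra ℂ (SGen n) :=
  if h : 1 ≤ a ∧ a < n then FreeAlgebra.ι ℂ (SGen.T ⟨a, h⟩) else 0

/-- The generator `c_a` in the free algebra (junk value `0` outside the valid range). -/
def cf (n a : ℕ) : FreeAlgebra ℂ (SGen n) :=
  if h : 1 ≤ a ∧ a ≤ n then FreeAlgebra.ι ℂ (SGen.C ⟨a, h⟩) else 0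

/-- Defining relations of the Sergeev superalgebra `S_n`. -/
inductive SRel (n : ℕ) : FreeAlgebra ℂ (SGen n) → FreeAlgebra ℂ (SGen n) → Prop
  | tsq (a : ℕ) (h1 : 1 ≤ a) (h2 : a < n) : SRel n (tf n a * tf n a) 1
  | tbraid (a : ℕ) (h1 : 1 ≤ a) (h2 : a + 1 < n) :
      SRel n (tf n a * tf n (a + 1) * tf n a) (tf n (a + 1) * tf n a * tf n (a + 1))
  | tanti (a b : ℕ) (h1 : 1 ≤ a) (h2 : b < n) (h3 : a + 1 < b) :
      SRel n (tf n a * tf n b) (-(tf n b * tf n a))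
  | csq (a : ℕ) (h1 : 1 ≤ a) (h2 : a ≤ n) : SRel n (cf n a * cf n a) (-1)
  | canti (a b : ℕ) (h1 : 1 ≤ a) (h2 : a ≤ n) (h3 : 1 ≤ b) (h4 : b ≤ n) (h5 : a ≠ b) :
      SRel n (cf n a * cf n b) (-(cf n b * cf n a))
  | tc (a b : ℕ) (h1 : 1 ≤ a) (h2 : a < n) (h3 : 1 ≤ b) (h4 : b ≤ n) :
      SRel n (tf n a * cf n b) (-(cf n b * tf n a))

/-- The Sergeev superalgebra `S_n`, presented by generators and relations. -/
abbrev Sergeev (n : ℕ) : Type := RingQuot (SRel n)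

/-- The generator `t_a` of `S_n`. -/
def tS (n a : ℕ) : Sergeev n := RingQuot.mkAlgHom ℂ (SRel n) (tf n a)

/-- The generator `c_a` of `S_n`. -/
def cS (n a : ℕ) : Sergeev n := RingQuot.mkAlgHom ℂ (SRel n) (cf n a)

/-- `t_{ab} = (-1)^(b-a-1) t_{b-1} ⋯ t_{a+1} t_a t_{a+1} ⋯ t_{b-1}` for `a < b`. -/
def ttS (n a b : ℕ) : Sergeev n :=
  (-1 : ℂ) ^ (b - a - 1) •
    ((((List.range' (a + 1) (b - 1 - a)).reverse.map (tS n)).prod) * tS n a *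
      (((List.range' (a + 1) (b - 1 - a)).map (tS n)).prod))

/-- `t_{ab}` for all `a ≠ b`, with `t_{ba} = -t_{ab}`. -/
def tsgn (n a b : ℕ) : Sergeev n :=
  if a < b then ttS n a b else if b < a then -ttS n b a else 0

/-- The odd Jucys–Murphy element `m_a = t_{1a} + ⋯ + t_{a-1,a}`. -/
def mS (n a : ℕ) : Sergeev n := ∑ k ∈ Finset.Ico 1 a, tsgn n k a

/-- The (even) Jucys–Murphy element `x_a = √2 m_a c_a`. -/
def xS (n a : ℕ) : Sergeev n := (Real.sqrt 2 : ℂ) • (mS n a * cS n a)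

/-- `s_a = (1/√2) t_a (c_{a+1} - c_a)`. -/
def sS (n a : ℕ) : Sergeev n := ((Real.sqrt 2 : ℂ))⁻¹ • (tS n a * (cS n (a + 1) - cS n a))

/-- The intertwiner `φ_a`. -/
def phiS (n a : ℕ) : Sergeev n :=
  sS n a * (xS n a ^ 2 - xS n (a + 1) ^ 2) + xS n a + xS n (a + 1)
    - cS n a * cS n (a + 1) * (xS n a - xS n (a + 1))

/-- Boxes of the shifted Young diagram of a strict partition `lam` (1-based): the
box `(i,j)` is present iff `i ≤ j ≤ λ_i + i - 1`. -/
def cells (lam : List ℕ) : Set (ℕ × ℕ) :=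
  {p | 1 ≤ p.1 ∧ p.1 ≤ p.2 ∧ p.2 + 1 ≤ lam.getD (p.1 - 1) 0 + p.1}

/-- A standard barred tableau with `n` boxes: a strict partition `lam` of `n`,
a standard filling `entry` of the shifted diagram of `lam` by `1, …, n`
(increasing along rows and columns), and a set `barred` of barred entries,
none of which occupies a diagonal box. -/
structure SBT (n : ℕ) : Type where
  lam : List ℕ
  sorted : lam.Pairwise (· > ·)
  pos : ∀ p ∈ lam, 0 < p
  sum_eq : lam.sum = n
  entry : ℕ × ℕ → ℕ
  bij : Set.BijOn entry (cells lam) (Set.Icc 1 n)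
  entry_junk : ∀ p, p ∉ cells lam → entry p = 0
  row_incr : ∀ p ∈ cells lam, (p.1, p.2 + 1) ∈ cells lam → entry p < entry (p.1, p.2 + 1)
  col_incr : ∀ p ∈ cells lam, (p.1 + 1, p.2) ∈ cells lam → entry p < entry (p.1 + 1, p.2)
  barred : Set ℕ
  barred_sub : barred ⊆ Set.Icc 1 n
  barred_nondiag : ∀ p ∈ cells lam, entry p ∈ barred → p.1 ≠ p.2

/-- The box occupied by the entry `a`. -/
def SBT.box {n : ℕ} (U : SBT n) (a : ℕ) : ℕ × ℕ :=
  if h : ∃ p ∈ cells U.lam, U.entry p = a then h.choose else (0, 0)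

/-- The content `j - i` of the box occupied by the entry `a`. -/
def SBT.content {n : ℕ} (U : SBT n) (a : ℕ) : ℕ := (U.box a).2 - (U.box a).1

/-- The signed content `κ_a(U) = ± √(σ(σ+1))`, negative iff `a` is barred in `U`. -/
def SBT.kappa {n : ℕ} (U : SBT n) (a : ℕ) : ℂ :=
  (if a ∈ U.barred then -1 else 1) *
    ((Real.sqrt ((U.content a : ℝ) * ((U.content a : ℝ) + 1)) : ℝ) : ℂ)

/-- A set of boxes is (the set of boxes of) a shifted Young diagram of a strict partition. -/
def IsShifted (S : Set (ℕ × ℕ)) : Prop :=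
  (∀ p ∈ S, 1 ≤ p.1 ∧ p.1 ≤ p.2) ∧
  (∀ p ∈ S, p.1 < p.2 → (p.1, p.2 - 1) ∈ S) ∧
  (∀ p ∈ S, 1 < p.1 → (p.1 - 1, p.2) ∈ S)

/-- `q` is an addable box for the shifted diagram `S`. -/
def Addable (S : Set (ℕ × ℕ)) (q : ℕ × ℕ) : Prop := q ∉ S ∧ IsShifted (insert q S)

/-- The shape formed by the boxes of `U` holding the entries `1, …, k`. -/
def SBT.shapeAt {n : ℕ} (U : SBT n) (k : ℕ) : Set (ℕ × ℕ) :=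
  {p | p ∈ cells U.lam ∧ U.entry p ≤ k}

/-- `√(σ(σ+1))` where `σ` is the content of the box `q`. -/
def sqc (q : ℕ × ℕ) : ℂ :=
  ((Real.sqrt (((q.2 - q.1 : ℕ) : ℝ) * (((q.2 - q.1 : ℕ) : ℝ) + 1)) : ℝ) : ℂ)

/-- The signed contents of all possible barred or unbarred entries placed
in addable boxes of the shape `S` (a shape with at most `n` boxes). -/
def bVals (n : ℕ) (S : Set (ℕ × ℕ)) : Finset ℂ :=
  ((Finset.Icc 1 (n + 1) ×ˢ Finset.Icc 1 (n + 1)).filter fun q => Addable S q).biUnion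
    fun q => if q.1 = q.2 then {sqc q} else {sqc q, -sqc q}

/-- The Jucys–Murphy idempotent of the sub-tableau of `U` on the entries `1, …, k`,
computed in the ambient algebra `S_N` (the inclusion `S_r → S_N` sends `t_a ↦ t_a`,
`c_a ↦ c_a` and hence `x_a ↦ x_a`, so this represents the image of `e` under it). -/
def eAux (N : ℕ) {r : ℕ} (U : SBT r) : ℕ → Sergeev N
  | 0 => 1
  | 1 => 1
  | (k + 2) =>
      eAux N U (k + 1) *
        Polynomial.aeval (xS N (k + 2))
          (∏ b ∈ bVals r (U.shapeAt (k + 1)) \ {U.kappa (k + 2)},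
            (Polynomial.C ((U.kappa (k + 2) - b)⁻¹) * (Polynomial.X - Polynomial.C b)))

/-- The element `e_U` of a standard barred tableau `U` with `r` boxes, viewed in `S_N`. -/
def eIn (N : ℕ) {r : ℕ} (U : SBT r) : Sergeev N := eAux N U r

/-- The element `e_U ∈ S_n` associated with a standard barred tableau `U` with `n` boxes. -/
def eU {n : ℕ} (U : SBT n) : Sergeev n := eIn n U

/-! Write `s_a = (1/√2) t_a d_a` with `d_a = c_{a+1} - c_a`. Then `t_a` anticommutes with `d_a`
and `d_a² = -2`, so `s_a² = 1`; moreover `d_a c_a = -c_{a+1} d_a`, which gives the exchange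
relations with `c_a, c_{a+1}`, and a product of two odd elements commutes with everything that
anticommutes with both factors, which gives the remaining commutations. For the braid relation,
conjugation by the involution `s_a` sends `t_{a+1}` to `-t_a t_{a+1} t_a` and `c_{a+2} - c_{a+1}`
to `c_{a+2} - c_a`, so `s_a s_{a+1} s_a = (1/√2) (-t_a t_{a+1} t_a) (c_{a+2} - c_a)`; the same
computation gives `(1/√2) (-t_{a+1} t_a t_{a+1}) (c_{a+2} - c_a)` for `s_{a+1} s_a s_{a+1}`, and
the braid relation of the `t`'s identifies the two. -/

def Anticommute {R : Type*} [Mul R] [Neg R] (x y : R) : Prop := x * y = -(y * x)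

namespace Anticommute

variable {R : Type*} [Ring R] {x y z : R}

theorem symm (h : Anticommute x y) : Anticommute y x := by
  rw [Anticommute, h, neg_neg]

theorem zero_left (y : R) : Anticommute 0 y := by
  simp [Anticommute]

theorem zero_right (x : R) : Anticommute x 0 :=
  (zero_left x).symm

theorem left_comm (h : Anticommute x y) (z : R) : x * (y * z) = -(y * (x * z)) := by
  rw [← mul_assoc, h, neg_mul, mul_assoc]

theorem sub_right (hy : Anticommute x y) (hz : Anticommute x z) : Anticommute x (y - z) := by
  rw [Anticommute, mul_sub, sub_mul, hy, hz, neg_sub_neg, neg_sub]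

theorem sub_left (hx : Anticommute x z) (hy : Anticommute y z) : Anticommute (x - y) z :=
  (hx.symm.sub_right hy.symm).symm

theorem commute_mul_right (hy : Anticommute x y) (hz : Anticommute x z) : Commute x (y * z) := by
  rw [Commute, SemiconjBy, ← mul_assoc, hy, neg_mul, mul_assoc, hz, mul_neg, neg_neg, mul_assoc]

end Anticommute

structure IsSergeevTriple {R : Type*} [Ring R] (t c c' : R) : Prop where
  t_mul_self : t * t = 1
  c_mul_self : c * c = -1
  c'_mul_self : c' * c' = -1
  anticommute_c_c' : Anticommute c c'
  anticommute_t_c : Anticommute t c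
  anticommute_t_c' : Anticommute t c'

namespace IsSergeevTriple

variable {R : Type*} [Ring R] {t c c' : R}

theorem symm (h : IsSergeevTriple t c c') : IsSergeevTriple t c' c :=
  ⟨h.t_mul_self, h.c'_mul_self, h.c_mul_self, h.anticommute_c_c'.symm, h.anticommute_t_c',
    h.anticommute_t_c⟩

theorem sub_mul_self (h : IsSergeevTriple t c c') : (c' - c) * (c' - c) = -2 := by
  rw [mul_sub, sub_mul, sub_mul, h.c_mul_self, h.c'_mul_self, h.anticommute_c_c',
    ← one_add_one_eq_two]
  abel

theorem sub_mul_c (h : IsSergeevTriple t c c') : (c' - c) * c = -(c' * (c' - c)) := by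
  rw [mul_sub, sub_mul, h.c_mul_self, h.c'_mul_self]
  abel

end IsSergeevTriple

section SergeevSwap

variable {R : Type*} [Ring R] [Algebra ℂ R]

theorem inv_sqrt_two_smul_mul_smul (x y : R) :
    ((Real.sqrt 2 : ℂ))⁻¹ • x * ((Real.sqrt 2 : ℂ))⁻¹ • y = (2 : ℂ)⁻¹ • (x * y) := by
  rw [smul_mul_smul_comm, ← mul_inv, ← Complex.ofReal_mul, Real.mul_self_sqrt zero_le_two,
    Complex.ofReal_ofNat]

theorem inv_two_smul_mul_two (x : R) : (2 : ℂ)⁻¹ • (x * 2) = x := by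
  rw [Algebra.smul_def, ← map_ofNat (algebraMap ℂ R) 2, ← Algebra.commutes, ← mul_assoc,
    ← map_mul, inv_mul_cancel₀ two_ne_zero, map_one, one_mul]

def sergeevSwap (t c c' : R) : R := ((Real.sqrt 2 : ℂ))⁻¹ • (t * (c' - c))

theorem sergeevSwap_comm (t c c' : R) : sergeevSwap t c' c = -sergeevSwap t c c' := by
  rw [sergeevSwap, sergeevSwap, ← smul_neg, ← mul_neg, neg_sub]

theorem commute_sergeevSwap {x t c c' : R} (ht : Anticommute x t) (hc : Anticommute x c)
    (hc' : Anticommute x c') : Commute x (sergeevSwap t c c') :=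
  (ht.commute_mul_right (hc'.sub_right hc)).smul_right _

theorem sergeevSwap_commute {t c c' u e e' : R}
    (htu : Anticommute t u) (hte : Anticommute t e) (hte' : Anticommute t e')
    (hcu : Anticommute c u) (hce : Anticommute c e) (hce' : Anticommute c e')
    (hc'u : Anticommute c' u) (hc'e : Anticommute c' e) (hc'e' : Anticommute c' e') :
    Commute (sergeevSwap t c c') (sergeevSwap u e e') :=
  ((commute_sergeevSwap htu hte hte').mul_left
    (commute_sergeevSwap (hc'u.sub_left hcu) (hc'e.sub_left hce) (hc'e'.sub_left hce'))).smul_left _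

namespace IsSergeevTriple

variable {t c c' : R} (h : IsSergeevTriple t c c')
include h

theorem sergeevSwap_mul_self : sergeevSwap t c c' * sergeevSwap t c c' = 1 := by
  have hsq : t * (c' - c) * (t * (c' - c)) = 1 * 2 := by
    rw [mul_assoc, (h.anticommute_t_c'.sub_right h.anticommute_t_c).symm.left_comm, mul_neg,
      ← mul_assoc, h.t_mul_self, one_mul, h.sub_mul_self, neg_neg, one_mul]
  rw [sergeevSwap, inv_sqrt_two_smul_mul_smul, hsq, inv_two_smul_mul_two]

theorem sergeevSwap_mul_c : sergeevSwap t c c' * c = c' * sergeevSwap t c c' := by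
  rw [sergeevSwap, smul_mul_assoc, mul_smul_comm, mul_assoc, h.sub_mul_c, mul_neg,
    h.anticommute_t_c'.left_comm, neg_neg]

theorem sergeevSwap_mul_c' : sergeevSwap t c c' * c' = c * sergeevSwap t c c' := by
  simpa only [sergeevSwap_comm t c c', neg_mul, mul_neg, neg_inj] using h.symm.sergeevSwap_mul_c

theorem sergeevSwap_mul_mul_self_of_commute {x : R} (hx : Commute (sergeevSwap t c c') x) :
    sergeevSwap t c c' * x * sergeevSwap t c c' = x := by
  rw [hx.eq, mul_assoc, h.sergeevSwap_mul_self, mul_one]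

theorem sergeevSwap_mul_c_mul_self : sergeevSwap t c c' * c * sergeevSwap t c c' = c' := by
  rw [h.sergeevSwap_mul_c, mul_assoc, h.sergeevSwap_mul_self, mul_one]

theorem sergeevSwap_mul_c'_mul_self : sergeevSwap t c c' * c' * sergeevSwap t c c' = c := by
  rw [h.sergeevSwap_mul_c', mul_assoc, h.sergeevSwap_mul_self, mul_one]

theorem sergeevSwap_conj_of_anticommute {u : R} (hc : Anticommute u c) (hc' : Anticommute u c') :
    sergeevSwap t c c' * u * sergeevSwap t c c' = -(t * u * t) := by
  have hdu : Anticommute (c' - c) u := hc'.symm.sub_left hc.symm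
  have hdt : Anticommute (c' - c) t := (h.anticommute_t_c'.sub_right h.anticommute_t_c).symm
  have hconj : t * (c' - c) * u * (t * (c' - c)) = -(t * u * t) * 2 := by
    simp only [mul_assoc, hdu.left_comm, hdt.left_comm, h.sub_mul_self, mul_neg, neg_mul, neg_neg]
  rw [sergeevSwap, smul_mul_assoc, inv_sqrt_two_smul_mul_smul, hconj, inv_two_smul_mul_two]

theorem sergeevSwap_conj_smul_mul {u : R} (hc : Anticommute u c) (hc' : Anticommute u c')
    (r : ℂ) (e : R) :
    sergeevSwap t c c' * (r • (u * e)) * sergeevSwap t c c' =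
      r • (-(t * u * t) * (sergeevSwap t c c' * e * sergeevSwap t c c')) := by
  rw [← h.sergeevSwap_conj_of_anticommute hc hc', mul_smul_comm, smul_mul_assoc]
  congr 1
  simp only [mul_assoc]
  rw [← mul_assoc (sergeevSwap t c c') (sergeevSwap t c c'), h.sergeevSwap_mul_self, one_mul]

end IsSergeevTriple

theorem sergeevSwap_braid {t u c₁ c₂ c₃ : R} (h₁ : IsSergeevTriple t c₁ c₂)
    (h₂ : IsSergeevTriple u c₂ c₃) (hbraid : t * u * t = u * t * u) (hu₁ : Anticommute u c₁)
    (ht₃ : Anticommute t c₃) (h₁₃ : Anticommute c₁ c₃) :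
    sergeevSwap t c₁ c₂ * sergeevSwap u c₂ c₃ * sergeevSwap t c₁ c₂ =
      sergeevSwap u c₂ c₃ * sergeevSwap t c₁ c₂ * sergeevSwap u c₂ c₃ := by
  have hc₃ : sergeevSwap t c₁ c₂ * c₃ * sergeevSwap t c₁ c₂ = c₃ :=
    h₁.sergeevSwap_mul_mul_self_of_commute
      (commute_sergeevSwap ht₃.symm h₁₃.symm h₂.anticommute_c_c'.symm).symm
  have hc₁ : sergeevSwap u c₂ c₃ * c₁ * sergeevSwap u c₂ c₃ = c₁ :=
    h₂.sergeevSwap_mul_mul_self_of_commute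
      (commute_sergeevSwap hu₁.symm h₁.anticommute_c_c' h₁₃).symm
  calc sergeevSwap t c₁ c₂ * sergeevSwap u c₂ c₃ * sergeevSwap t c₁ c₂
      = ((Real.sqrt 2 : ℂ))⁻¹ • (-(t * u * t) * (c₃ - c₁)) := by
        rw [sergeevSwap.eq_1 u c₂ c₃, h₁.sergeevSwap_conj_smul_mul hu₁ h₂.anticommute_t_c, mul_sub (sergeevSwap t c₁ c₂), sub_mul,
          hc₃, h₁.sergeevSwap_mul_c'_mul_self]
    _ = ((Real.sqrt 2 : ℂ))⁻¹ • (-(u * t * u) * (c₃ - c₁)) := by rw [hbraid]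
    _ = sergeevSwap u c₂ c₃ * sergeevSwap t c₁ c₂ * sergeevSwap u c₂ c₃ := by
        rw [sergeevSwap.eq_1 t c₁ c₂, h₂.sergeevSwap_conj_smul_mul h₁.anticommute_t_c' ht₃, mul_sub (sergeevSwap u c₂ c₃), sub_mul,
          h₂.sergeevSwap_mul_c_mul_self, hc₁]

end SergeevSwap

section Sergeev

variable {n : ℕ}

theorem tS_eq_zero {a : ℕ} (h : ¬(1 ≤ a ∧ a < n)) : tS n a = 0 := by
  simp [tS, tf, h]

theorem cS_eq_zero {a : ℕ} (h : ¬(1 ≤ a ∧ a ≤ n)) : cS n a = 0 := by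
  simp [cS, cf, h]

theorem tS_mul_self {a : ℕ} (h1 : 1 ≤ a) (h2 : a < n) : tS n a * tS n a = 1 := by
  simpa [tS] using RingQuot.mkAlgHom_rel ℂ (SRel.tsq a h1 h2)

theorem cS_mul_self {a : ℕ} (h1 : 1 ≤ a) (h2 : a ≤ n) : cS n a * cS n a = -1 := by
  simpa [cS] using RingQuot.mkAlgHom_rel ℂ (SRel.csq a h1 h2)

theorem tS_braid {a : ℕ} (h1 : 1 ≤ a) (h2 : a + 1 < n) :
    tS n a * tS n (a + 1) * tS n a = tS n (a + 1) * tS n a * tS n (a + 1) := by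
  simpa [tS] using RingQuot.mkAlgHom_rel ℂ (SRel.tbraid a h1 h2)

/- The anticommutation relations need no range hypotheses: out-of-range generators are `0`. -/

theorem anticommute_tS_tS {a b : ℕ} (hab : a + 1 < b) : Anticommute (tS n a) (tS n b) := by
  by_cases h : 1 ≤ a ∧ b < n
  · simpa [Anticommute, tS] using RingQuot.mkAlgHom_rel ℂ (SRel.tanti a b h.1 h.2 hab)
  · rcases not_and_or.1 h with ha | hb
    · rw [tS_eq_zero (by omega : ¬(1 ≤ a ∧ a < n))]
      exact Anticommute.zero_left _
    · rw [tS_eq_zero (by omega : ¬(1 ≤ b ∧ b < n))]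
      exact Anticommute.zero_right _

theorem anticommute_cS_cS {a b : ℕ} (hab : a ≠ b) : Anticommute (cS n a) (cS n b) := by
  by_cases ha : 1 ≤ a ∧ a ≤ n
  · by_cases hb : 1 ≤ b ∧ b ≤ n
    · simpa [Anticommute, cS] using
        RingQuot.mkAlgHom_rel ℂ (SRel.canti a b ha.1 ha.2 hb.1 hb.2 hab)
    · rw [cS_eq_zero hb]
      exact Anticommute.zero_right _
  · rw [cS_eq_zero ha]
    exact Anticommute.zero_left _

theorem anticommute_tS_cS (a b : ℕ) : Anticommute (tS n a) (cS n b) := by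
  by_cases ha : 1 ≤ a ∧ a < n
  · by_cases hb : 1 ≤ b ∧ b ≤ n
    · simpa [Anticommute, tS, cS] using
        RingQuot.mkAlgHom_rel ℂ (SRel.tc a b ha.1 ha.2 hb.1 hb.2)
    · rw [cS_eq_zero hb]
      exact Anticommute.zero_right _
  · rw [tS_eq_zero ha]
    exact Anticommute.zero_left _

theorem isSergeevTriple_tS_cS {a : ℕ} (h1 : 1 ≤ a) (h2 : a < n) :
    IsSergeevTriple (tS n a) (cS n a) (cS n (a + 1)) :=
  ⟨tS_mul_self h1 h2, cS_mul_self h1 h2.le, cS_mul_self (by omega) h2,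
    anticommute_cS_cS (by omega), anticommute_tS_cS a a, anticommute_tS_cS a (a + 1)⟩

theorem sS_eq_sergeevSwap (a : ℕ) : sS n a = sergeevSwap (tS n a) (cS n a) (cS n (a + 1)) := rfl

theorem sS_commute {a b : ℕ} (hab : a + 1 < b) : Commute (sS n a) (sS n b) :=
  sergeevSwap_commute (anticommute_tS_tS hab) (anticommute_tS_cS a b)
    (anticommute_tS_cS a (b + 1)) (anticommute_tS_cS b a).symm (anticommute_cS_cS (by omega))
    (anticommute_cS_cS (by omega)) (anticommute_tS_cS b (a + 1)).symm
    (anticommute_cS_cS (by omega)) (anticommute_cS_cS (by omega))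

theorem sS_braid {a : ℕ} (h1 : 1 ≤ a) (h2 : a + 1 < n) :
    sS n a * sS n (a + 1) * sS n a = sS n (a + 1) * sS n a * sS n (a + 1) :=
  sergeevSwap_braid (isSergeevTriple_tS_cS h1 (by omega)) (isSergeevTriple_tS_cS (by omega) h2)
    (tS_braid h1 h2) (anticommute_tS_cS (a + 1) a) (anticommute_tS_cS a (a + 1 + 1))
    (anticommute_cS_cS (by omega))

theorem commute_cS_sS {a b : ℕ} (hba : b ≠ a) (hba' : b ≠ a + 1) : Commute (cS n b) (sS n a) :=
  commute_sergeevSwap (anticommute_tS_cS a b).symm (anticommute_cS_cS hba)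
    (anticommute_cS_cS hba')

end Sergeev

/-- In the Sergeev superalgebra `S_n`, the elements `s_a = (1/√2) t_a (c_{a+1} - c_a)`
satisfy the symmetric group relations and the semidirect-product relations with the
Clifford generators. -/
theorem statement0 (n a b : ℕ) (ha1 : 1 ≤ a) (ha2 : a < n) :
    sS n a * sS n a = 1 ∧
    (a + 1 < n → sS n a * sS n (a + 1) * sS n a = sS n (a + 1) * sS n a * sS n (a + 1)) ∧
    (1 ≤ b → b < n → (a + 1 < b ∨ b + 1 < a) → sS n a * sS n b = sS n b * sS n a) ∧
    sS n a * cS n a = cS n (a + 1) * sS n a ∧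
    sS n a * cS n (a + 1) = cS n a * sS n a ∧
    (1 ≤ b → b ≤ n → b ≠ a → b ≠ a + 1 → sS n a * cS n b = cS n b * sS n a) := by
  have hs := isSergeevTriple_tS_cS ha1 ha2
  refine ⟨hs.sergeevSwap_mul_self, sS_braid ha1, fun _ _ hab => ?_, hs.sergeevSwap_mul_c,
    hs.sergeevSwap_mul_c', fun _ _ hba hba' => (commute_cS_sS hba hba').eq.symm⟩
  rcases hab with hab | hab
  · exact (sS_commute hab).eq
  · exact (sS_commute hab).eq.symm
end
end

section
/- In the Sergeev superalgebra S_n, for every a one has x_a² = 2 m_a², where m_a = t_{1a} + ⋯ + t_{a−1,a}, and the Jucys–Murphy elements pairwise commute: x_a x_b = x_b x_a for all a, b = 1,…,n. -/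
open scoped Classical

noncomputable section

/-! The odd Jucys–Murphy elements satisfy the recursion `m_{b+1} = t_b - t_b m_b t_b`. Together
with the braid relation it shows that `t_j` anticommutes with `m_b` whenever `j + 1 < b`. For
`a < b`, the element `m_a` is a sum of words of odd length in `t_1, …, t_{a-1}`, so it anticommutes
with `m_b`; in the same way every `m_a` anticommutes with every `c_j`. Since `c_a² = -1` and the
`c`'s anticommute, both identities for `x_a = √2 m_a c_a` follow by moving factors past each
other, one sign per move. -/

def AntiCommute {R : Type*} [Mul R] [Neg R] (a b : R) : Prop := a * b = -(b * a)

namespace AntiCommute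

variable {R : Type*}

section NonUnitalRing

variable [NonUnitalRing R] {a b c d : R}

theorem symm (h : AntiCommute a b) : AntiCommute b a := by
  rw [AntiCommute, h, neg_neg]

theorem neg_right (h : AntiCommute a b) : AntiCommute a (-b) := by
  rw [AntiCommute, mul_neg, neg_mul, h]

theorem add_right (hb : AntiCommute a b) (hc : AntiCommute a c) : AntiCommute a (b + c) := by
  rw [AntiCommute, mul_add, add_mul, hb, hc, neg_add]

theorem sum_right {ι : Type*} {s : Finset ι} {f : ι → R} (h : ∀ i ∈ s, AntiCommute a (f i)) :
    AntiCommute a (∑ i ∈ s, f i) := by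
  rw [AntiCommute, Finset.mul_sum, Finset.sum_mul, ← Finset.sum_neg_distrib]
  exact Finset.sum_congr rfl h

theorem mul_mul_right (hb : AntiCommute a b) (hc : AntiCommute a c) (hd : AntiCommute a d) :
    AntiCommute a (b * c * d) := by
  unfold AntiCommute at *
  calc a * (b * c * d) = a * b * c * d := by simp only [mul_assoc]
    _ = -(b * (a * c) * d) := by rw [hb]; simp only [neg_mul, mul_assoc]
    _ = b * c * (a * d) := by rw [hc]; simp only [neg_mul, mul_neg, neg_neg, mul_assoc]
    _ = -(b * c * d * a) := by rw [hd]; simp only [mul_neg, mul_assoc]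

theorem commute_mul_mul {m c m' c' : R} (hm : AntiCommute m m') (hc : AntiCommute c c')
    (hmc' : AntiCommute m c') (hm'c : AntiCommute m' c) : Commute (m * c) (m' * c') := by
  have key : ∀ {x y x' y' : R}, AntiCommute x' y →
      x * y * (x' * y') = -(x * x' * (y * y')) := fun {x y x' y'} h => by
    calc x * y * (x' * y') = x * (y * x') * y' := by simp only [mul_assoc]
      _ = _ := by rw [h.symm]; simp only [neg_mul, mul_neg, mul_assoc]
  rw [Commute, SemiconjBy, key hm'c, key hmc', hm, hc]
  simp only [neg_mul, mul_neg, neg_neg]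

end NonUnitalRing

section Ring

variable [Ring R]

theorem mul_mul_self_of_mul_self_eq_neg_one {a b : R} (h : AntiCommute a b) (hb : b * b = -1) :
    a * b * (a * b) = a * a := by
  calc a * b * (a * b) = a * (b * a) * b := by simp only [mul_assoc]
    _ = -(a * a * (b * b)) := by rw [h.symm]; simp only [neg_mul, mul_neg, mul_assoc]
    _ = a * a := by rw [hb, mul_neg_one, neg_neg]

theorem of_braid {s t M : R} (hs : s * s = 1) (ht : t * t = 1)
    (hst : s * t * s = t * s * t) (htM : AntiCommute t M) :
    AntiCommute s (-(t * (-(s * M * s) + s) * t) + t) := by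
  set X := -(t * (-(s * M * s) + s) * t) + t
  have htMt : t * M * t = -M := by rw [htM, neg_mul, mul_assoc, ht, mul_one]
  have h₁ : s * (t * s * M * s * t) * s = -(t * s * M * s * t) :=
    calc _ = s * t * s * M * (s * t * s) := by noncomm_ring
      _ = t * s * (t * M * t) * s * t := by rw [hst]; noncomm_ring
      _ = _ := by rw [htMt]; noncomm_ring
  have h₂ : s * (t * s * t) * s = t :=
    calc _ = s * t * s * (t * s) := by noncomm_ring
      _ = t * s * (t * t) * s := by rw [hst]; noncomm_ring
      _ = t := by rw [ht, mul_one, mul_assoc, hs, mul_one]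
  -- `s` is an involution, so anticommuting with it means being negated by conjugation
  have hconj : s * X * s = -X :=
    calc s * X * s = s * (t * s * M * s * t) * s - s * (t * s * t) * s + s * t * s := by
          simp only [X]; noncomm_ring
      _ = -X := by rw [h₁, h₂, hst]; simp only [X]; noncomm_ring
  calc s * X = s * X * s * s := by rw [mul_assoc _ s s, hs, mul_one]
    _ = -(X * s) := by rw [hconj, neg_mul]

end Ring

end AntiCommute

section Sergeev

variable {n : ℕ}

theorem antiCommute_tS_tS {a b : ℕ} (h1 : 1 ≤ a) (h2 : a + 1 < b) (h3 : b < n) :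
    AntiCommute (tS n a) (tS n b) := by
  simpa [tS, AntiCommute] using RingQuot.mkAlgHom_rel ℂ (SRel.tanti (n := n) a b h1 h3 h2)

theorem antiCommute_cS_cS {a b : ℕ} (h1 : 1 ≤ a) (h2 : a ≤ n) (h3 : 1 ≤ b) (h4 : b ≤ n)
    (hab : a ≠ b) : AntiCommute (cS n a) (cS n b) := by
  simpa [cS, AntiCommute] using RingQuot.mkAlgHom_rel ℂ (SRel.canti (n := n) a b h1 h2 h3 h4 hab)

theorem antiCommute_tS_cS {a b : ℕ} (h1 : 1 ≤ a) (h2 : a < n) (h3 : 1 ≤ b) (h4 : b ≤ n) :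
    AntiCommute (tS n a) (cS n b) := by
  simpa [tS, cS, AntiCommute] using RingQuot.mkAlgHom_rel ℂ (SRel.tc (n := n) a b h1 h2 h3 h4)

theorem ttS_self_succ (a : ℕ) : ttS n a (a + 1) = tS n a := by
  simp [ttS]

theorem ttS_succ {a b : ℕ} (hab : a < b) :
    ttS n a (b + 1) = -(tS n b * ttS n a b * tS n b) := by
  have e1 : b + 1 - 1 - a = (b - 1 - a) + 1 := by omega
  have e2 : b + 1 - a - 1 = (b - a - 1) + 1 := by omega
  have e3 : b - a - 1 = b - 1 - a := by omega
  have e4 : a + 1 + 1 * (b - 1 - a) = b := by omega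
  -- `rw [neg_smul]` cannot unify its `Module` instance with the `ℂ`-action of `RingQuot`
  have hneg : ∀ (r : ℂ) (x : Sergeev n), (-r) • x = -(r • x) := fun r x => neg_smul r x
  rw [ttS, ttS, e1, e2, e3, List.range'_concat, e4]
  simp only [List.reverse_append, List.map_append, List.prod_append, List.map_cons, List.map_nil,
    List.reverse_cons, List.reverse_nil, List.nil_append, List.prod_cons, List.prod_nil, pow_succ]
  rw [mul_neg_one, hneg]
  simp [mul_assoc]

theorem mS_eq_sum_ttS (a : ℕ) : mS n a = ∑ k ∈ Finset.Ico 1 a, ttS n k a :=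
  Finset.sum_congr rfl fun _ hk => if_pos (Finset.mem_Ico.mp hk).2

theorem mS_succ {b : ℕ} (hb : 1 ≤ b) :
    mS n (b + 1) = -(tS n b * mS n b * tS n b) + tS n b := by
  rw [mS_eq_sum_ttS, mS_eq_sum_ttS, Finset.sum_Ico_succ_top hb, ttS_self_succ, Finset.mul_sum,
    Finset.sum_mul, ← Finset.sum_neg_distrib]
  exact congrArg (· + _) (Finset.sum_congr rfl fun k hk => ttS_succ (Finset.mem_Ico.mp hk).2)

theorem antiCommute_ttS_of_tS {y : Sergeev n} {k a : ℕ} (hk : 1 ≤ k) (hka : k < a)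
    (hy : ∀ j, 1 ≤ j → j < a → AntiCommute y (tS n j)) : AntiCommute y (ttS n k a) := by
  induction a, hka using Nat.le_induction with
  | base => rw [ttS_self_succ]; exact hy k hk (lt_add_one k)
  | succ a hka ih =>
    have hya := hy a (by omega) (lt_add_one a)
    rw [ttS_succ hka]
    exact (hya.mul_mul_right (ih fun j hj hja => hy j hj (by omega)) hya).neg_right

theorem antiCommute_mS_of_tS {y : Sergeev n} {a : ℕ}
    (hy : ∀ j, 1 ≤ j → j < a → AntiCommute y (tS n j)) : AntiCommute y (mS n a) := by
  rw [mS_eq_sum_ttS]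
  exact AntiCommute.sum_right fun k hk =>
    antiCommute_ttS_of_tS (Finset.mem_Ico.mp hk).1 (Finset.mem_Ico.mp hk).2 hy

theorem antiCommute_tS_mS {j b : ℕ} (hj : 1 ≤ j) (hjb : j + 1 < b) (hb : b ≤ n) :
    AntiCommute (tS n j) (mS n b) := by
  induction b, hjb using Nat.le_induction with
  | base =>
    rw [mS_succ (by omega), mS_succ hj]
    exact AntiCommute.of_braid (tS_mul_self hj (by omega)) (tS_mul_self (by omega) hb)
      (tS_braid hj hb)
      (antiCommute_mS_of_tS fun i hi hij => (antiCommute_tS_tS hi (by omega) hb).symm)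
  | succ b hjb ih =>
    have hjb' := antiCommute_tS_tS hj hjb hb
    rw [mS_succ (by omega)]
    exact ((hjb'.mul_mul_right (ih (by omega)) hjb').neg_right).add_right hjb'

theorem antiCommute_mS_mS {a b : ℕ} (hab : a ≠ b) (ha : a ≤ n) (hb : b ≤ n) :
    AntiCommute (mS n a) (mS n b) := by
  have key : ∀ {a b : ℕ}, a < b → b ≤ n → AntiCommute (mS n b) (mS n a) := fun hab hb =>
    antiCommute_mS_of_tS fun j hj hja => (antiCommute_tS_mS hj (by omega) hb).symm
  rcases hab.lt_or_gt with h | h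
  · exact (key h hb).symm
  · exact key h ha

theorem antiCommute_mS_cS {a j : ℕ} (ha : a ≤ n) (hj : 1 ≤ j) (hjn : j ≤ n) :
    AntiCommute (mS n a) (cS n j) :=
  (antiCommute_mS_of_tS fun i hi hia => (antiCommute_tS_cS hi (by omega) hj hjn).symm).symm

theorem xS_mul_self {a : ℕ} (ha1 : 1 ≤ a) (ha2 : a ≤ n) :
    xS n a * xS n a = (2 : ℂ) • (mS n a * mS n a) := by
  have hsqrt : (Real.sqrt 2 : ℂ) * (Real.sqrt 2 : ℂ) = 2 := by
    rw [← Complex.ofReal_mul, Real.mul_self_sqrt zero_le_two, Complex.ofReal_ofNat]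
  rw [xS, smul_mul_smul_comm, hsqrt,
    (antiCommute_mS_cS ha2 ha1 ha2).mul_mul_self_of_mul_self_eq_neg_one (cS_mul_self ha1 ha2)]

theorem commute_xS_xS {a b : ℕ} (ha1 : 1 ≤ a) (ha2 : a ≤ n) (hb1 : 1 ≤ b) (hb2 : b ≤ n) :
    Commute (xS n a) (xS n b) := by
  rcases eq_or_ne a b with rfl | hab
  · exact Commute.refl _
  · have h := (antiCommute_mS_mS hab ha2 hb2).commute_mul_mul
      (antiCommute_cS_cS ha1 ha2 hb1 hb2 hab) (antiCommute_mS_cS ha2 hb1 hb2)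
      (antiCommute_mS_cS hb2 ha1 ha2)
    exact (h.smul_left _).smul_right _

end Sergeev

/-- In the Sergeev superalgebra `S_n`, one has `x_a² = 2 m_a²`, and the Jucys–Murphy
elements pairwise commute. -/
theorem statement1 (n a b : ℕ) (ha1 : 1 ≤ a) (ha2 : a ≤ n) (hb1 : 1 ≤ b) (hb2 : b ≤ n) :
    xS n a * xS n a = (2 : ℂ) • (mS n a * mS n a) ∧
    xS n a * xS n b = xS n b * xS n a :=
  ⟨xS_mul_self ha1 ha2, (commute_xS_xS ha1 ha2 hb1 hb2).eq⟩
end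
end

section
/- The idempotents e_U form a decomposition of the identity in the Sergeev superalgebra: 1 = Σ_{λ} Σ_{U} e_U, where λ runs over strict partitions of n and U over standard barred λ-tableaux. -/
open scoped Classical

noncomputable section

/-!
Deleting the box of `n` from a standard barred tableau `U` and recording `κ_n(U)` is a bijection
onto the pairs `(V, b)` of a standard barred tableau `V` with `n - 1` boxes and a node `b` of the
defining product of `e_U`, i.e. a signed content of a possible entry `n` in an addable box of `V`:
an addable box of a shifted diagram is determined by its content, and the sign is free exactly off
the diagonal. That product is the Lagrange basis polynomial `L_b` of these nodes, so
`e_U = e_V L_b(x_n)`, and the sum over the fibre above `V` is `e_V Σ_b L_b(x_n) = e_V`. Induction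
on `n`, starting from the empty tableau, gives `Σ_U e_U = 1`.
-/

namespace List

/-- Row `i` is counted from `0`, whereas the boxes `(i + 1, j)` of `cells` are counted from `1`. -/
def growRow (l : List ℕ) (i : ℕ) : List ℕ :=
  if i = l.length then l ++ [1] else l.set i (l.getD i 0 + 1)

def shrinkRow (l : List ℕ) (i : ℕ) : List ℕ :=
  if l.getD i 0 = 1 then l.take i else l.set i (l.getD i 0 - 1)

theorem getD_growRow {l : List ℕ} {i : ℕ} (hi : i ≤ l.length) (j : ℕ) :
    (l.growRow i).getD j 0 = if j = i then l.getD i 0 + 1 else l.getD j 0 := by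
  simp only [growRow, getD_eq_getElem?_getD]
  split_ifs <;> simp [getElem?_append, getElem?_set, *] <;> grind

theorem getD_shrinkRow {l : List ℕ} (hs : l.Pairwise (· > ·)) (i j : ℕ) :
    (l.shrinkRow i).getD j 0 = if j = i then l.getD i 0 - 1 else l.getD j 0 := by
  simp only [shrinkRow, getD_eq_getElem?_getD]
  split_ifs <;> simp [getElem?_take, getElem?_set, *] <;> grind [List.pairwise_iff_getElem]

theorem sum_growRow {l : List ℕ} {i : ℕ} (hi : i ≤ l.length) :
    (l.growRow i).sum = l.sum + 1 := by
  unfold growRow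
  split_ifs with h
  · simp
  · have hlt : i < l.length := by omega
    rw [sum_set, if_pos hlt, getD_eq_getElem _ _ hlt, ← sum_take_add_sum_drop l i,
      drop_eq_getElem_cons hlt, sum_cons]
    omega

theorem sum_shrinkRow {l : List ℕ} (hs : l.Pairwise (· > ·)) (hp : ∀ x ∈ l, 0 < x) {i : ℕ}
    (hi : i < l.length) : (l.shrinkRow i).sum + 1 = l.sum := by
  have hsplit : l.sum = (l.take i).sum + l[i] + (l.drop (i + 1)).sum := by
    rw [← sum_take_add_sum_drop l i, drop_eq_getElem_cons hi, sum_cons]; ring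
  unfold shrinkRow
  rw [getD_eq_getElem _ _ hi]
  split_ifs with h
  · have hlast : l.length ≤ i + 1 := by
      by_contra! hc
      have := pairwise_iff_getElem.mp hs i (i + 1) hi hc (by omega)
      have := hp _ (l.getElem_mem hc)
      omega
    rw [hsplit, drop_eq_nil_of_le hlast, h]; simp
  · rw [sum_set, if_pos hi, hsplit]
    have := hp _ (l.getElem_mem hi)
    omega

theorem pos_growRow {l : List ℕ} (hp : ∀ x ∈ l, 0 < x) (i : ℕ) :
    ∀ x ∈ l.growRow i, 0 < x := by
  unfold growRow
  split_ifs
  · simpa [or_imp, forall_and] using hp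
  · intro x hx
    rcases mem_or_eq_of_mem_set hx with hx | rfl
    exacts [hp x hx, Nat.succ_pos _]

theorem pos_shrinkRow {l : List ℕ} (hp : ∀ x ∈ l, 0 < x) {i : ℕ} (hi : i < l.length) :
    ∀ x ∈ l.shrinkRow i, 0 < x := by
  unfold shrinkRow
  split_ifs with h
  · exact fun x hx => hp x (mem_of_mem_take hx)
  · intro x hx
    rcases mem_or_eq_of_mem_set hx with hx | rfl
    · exact hp x hx
    · have := hp _ (l.getElem_mem hi)
      rw [getD_eq_getElem _ _ hi] at h ⊢
      omega

theorem getElem?_eq_of_pos {l : List ℕ} (hp : ∀ x ∈ l, 0 < x) (j : ℕ) :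
    l[j]? = if l.getD j 0 = 0 then none else some (l.getD j 0) := by
  rw [getD_eq_getElem?_getD]
  cases h : l[j]? with
  | none => simp
  | some x => simp [(hp x (mem_of_getElem? h)).ne']

theorem eq_of_getD_eq {l₁ l₂ : List ℕ} (h₁ : ∀ x ∈ l₁, 0 < x) (h₂ : ∀ x ∈ l₂, 0 < x)
    (h : ∀ j, l₁.getD j 0 = l₂.getD j 0) : l₁ = l₂ :=
  ext_getElem? fun j => by rw [getElem?_eq_of_pos h₁, getElem?_eq_of_pos h₂, h]

theorem lt_length_of_getD_pos {l : List ℕ} {i : ℕ} (h : 0 < l.getD i 0) : i < l.length := by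
  by_contra! hi
  rw [getD_eq_default _ _ hi] at h
  exact h.false

end List

theorem mem_cells {l : List ℕ} {p : ℕ × ℕ} :
    p ∈ cells l ↔ 1 ≤ p.1 ∧ p.1 ≤ p.2 ∧ p.2 + 1 ≤ l.getD (p.1 - 1) 0 + p.1 := Iff.rfl

theorem cells_nil : cells [] = ∅ := by
  ext p
  simp only [mem_cells, List.getD_nil, zero_add, Set.mem_empty_iff_false, iff_false]
  omega

theorem getD_eq_of_cells_eq {l₁ l₂ : List ℕ} (h : cells l₁ = cells l₂) (j : ℕ) :
    l₁.getD j 0 = l₂.getD j 0 := by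
  have hle : ∀ {l l' : List ℕ}, cells l = cells l' → l.getD j 0 ≤ l'.getD j 0 := by
    intro l l' h
    by_contra! hlt
    have hmem : (j + 1, l.getD j 0 + j) ∈ cells l := by
      simp only [mem_cells, Nat.add_sub_cancel]; omega
    rw [h] at hmem
    simp only [mem_cells, Nat.add_sub_cancel] at hmem
    omega
  exact le_antisymm (hle h) (hle h.symm)

theorem cells_growRow {l : List ℕ} {i : ℕ} (hi : i ≤ l.length) :
    cells (l.growRow i) = insert (i + 1, l.getD i 0 + i + 1) (cells l) := by
  ext ⟨a, b⟩
  simp only [mem_cells, Set.mem_insert_iff, Prod.mk.injEq, List.getD_growRow hi]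
  split_ifs with ha
  · subst ha; omega
  · omega

theorem cells_shrinkRow {l : List ℕ} (hs : l.Pairwise (· > ·)) (i : ℕ) :
    cells (l.shrinkRow i) = cells l \ {(i + 1, l.getD i 0 + i)} := by
  ext ⟨a, b⟩
  simp only [mem_cells, Set.mem_sdiff, Set.mem_singleton_iff, Prod.mk.injEq,
    List.getD_shrinkRow hs]
  split_ifs with ha
  · subst ha; omega
  · omega

theorem isShifted_cells {l : List ℕ} (hs : l.Pairwise (· > ·)) : IsShifted (cells l) := by
  refine ⟨fun p hp => ⟨hp.1, hp.2.1⟩, fun p hp _ => ?_, fun p hp h1 => ?_⟩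
  · simp only [mem_cells] at hp ⊢; omega
  · simp only [mem_cells] at hp ⊢
    have hlen : p.1 - 1 < l.length := List.lt_length_of_getD_pos (by omega)
    have := List.pairwise_iff_getElem.mp hs (p.1 - 1 - 1) (p.1 - 1) (by omega) hlen (by omega)
    rw [List.getD_eq_getElem _ _ hlen] at hp
    rw [List.getD_eq_getElem _ _ (by omega)]
    omega

theorem pairwise_of_isShifted_cells {l : List ℕ} (hp : ∀ x ∈ l, 0 < x)
    (h : IsShifted (cells l)) : l.Pairwise (· > ·) := by
  refine List.isChain_iff_pairwise.mp (List.isChain_iff_getElem.mpr fun i hi => ?_)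
  have hpos := hp _ (l.getElem_mem hi)
  have hmem : (i + 2, l[i + 1] + i + 1) ∈ cells l := by
    simp only [mem_cells, show i + 2 - 1 = i + 1 by omega, List.getD_eq_getElem _ _ hi]; omega
  have := h.2.2 _ hmem (by omega)
  simp only [mem_cells, show i + 2 - 1 - 1 = i by omega,
    List.getD_eq_getElem _ _ (Nat.lt_of_succ_lt hi)] at this
  omega

namespace IsShifted

variable {S : Set (ℕ × ℕ)} (h : IsShifted S) {p : ℕ × ℕ} (hp : p ∈ S)
include h hp

theorem left_mem {j : ℕ} (hj : p.1 ≤ j) (hj' : j ≤ p.2) : (p.1, j) ∈ S := by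
  induction hj' using Nat.decreasingInduction with
  | self => exact hp
  | of_succ k _ ih => simpa using h.2.1 _ (ih (by omega)) (by simp; omega)

theorem up_mem {i : ℕ} (hi : 1 ≤ i) (hi' : i ≤ p.1) : (i, p.2) ∈ S := by
  induction hi' using Nat.decreasingInduction with
  | self => exact hp
  | of_succ k _ ih => simpa using h.2.2 _ (ih (by omega)) (by simp; omega)

end IsShifted

namespace Addable

variable {S : Set (ℕ × ℕ)} {q : ℕ × ℕ} (hq : Addable S q)
include hq

theorem one_le_fst : 1 ≤ q.1 := (hq.2.1 q (Set.mem_insert q S)).1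

theorem fst_le_snd : q.1 ≤ q.2 := (hq.2.1 q (Set.mem_insert q S)).2

theorem snd_le_ncard_add_one (hS : S.Finite) : q.2 ≤ S.ncard + 1 := by
  have hrow : ∀ j ∈ Set.Icc 1 (q.2 - 1), (1, j) ∈ S := by
    rintro j ⟨hj, hj'⟩
    have h1 := hq.2.up_mem (Set.mem_insert q S) le_rfl hq.one_le_fst
    have h2 := hq.2.left_mem h1 hj (by simp; omega)
    exact h2.resolve_left fun h => by simp [Prod.ext_iff] at h; omega
  have := Set.ncard_le_ncard (Set.image_subset_iff.mpr hrow) hS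
  rw [Set.ncard_image_of_injective _ (fun a b h => by simpa using h), ← Finset.coe_Icc,
    Set.ncard_coe_finset, Nat.card_Icc] at this
  omega

theorem eq_of_content_eq {q' : ℕ × ℕ} (hq' : Addable S q') (hc : q.2 - q.1 = q'.2 - q'.1) :
    q = q' := by
  wlog hlt : q.1 < q'.1 generalizing q q'
  · rcases (not_lt.mp hlt).lt_or_eq with hgt | heq
    · exact (this hq' hq hc.symm hgt).symm
    · have := hq.fst_le_snd; have := hq'.fst_le_snd
      exact Prod.ext heq.symm (by omega)
  have := hq.fst_le_snd; have := hq'.fst_le_snd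
  have hup := hq'.2.up_mem (Set.mem_insert q' S) hq.one_le_fst hlt.le
  have hleft := hq'.2.left_mem hup (j := q.2) hq.fst_le_snd (by simp; omega)
  exact absurd ((hleft.resolve_left fun h => by simp [Prod.ext_iff] at h; omega)) hq.1

end Addable

theorem Addable.fst_sub_one_le_length {l : List ℕ} {q : ℕ × ℕ} (hq : Addable (cells l) q) :
    q.1 - 1 ≤ l.length := by
  by_contra! hc
  have := (hq.2.2.2 q (Set.mem_insert q _) (by omega)).resolve_left
    fun h => by simp [Prod.ext_iff] at h; omega
  simp only [mem_cells] at this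
  have := List.lt_length_of_getD_pos (l := l) (i := q.1 - 1 - 1) (by omega)
  omega

theorem Addable.snd_eq {l : List ℕ} {q : ℕ × ℕ} (hq : Addable (cells l) q) :
    q.2 = l.getD (q.1 - 1) 0 + q.1 := by
  have := hq.one_le_fst
  have hnot := hq.1
  simp only [mem_cells, not_and, not_le] at hnot
  rcases hq.fst_le_snd.lt_or_eq with hlt | heq
  · have := (hq.2.2.1 q (Set.mem_insert q _) hlt).resolve_left
      fun h => by simp [Prod.ext_iff] at h; omega
    simp only [mem_cells] at this
    omega
  · omega

theorem Addable.cells_growRow {l : List ℕ} {q : ℕ × ℕ} (hq : Addable (cells l) q) :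
    cells (l.growRow (q.1 - 1)) = insert q (cells l) := by
  rw [_root_.cells_growRow hq.fst_sub_one_le_length]
  have := hq.one_le_fst
  have := hq.snd_eq
  congr 1
  ext <;> dsimp only <;> omega

theorem addable_empty {q : ℕ × ℕ} (hq : Addable ∅ q) : q = (1, 1) := by
  rw [← cells_nil] at hq
  have := hq.one_le_fst
  have h1 := hq.fst_sub_one_le_length
  have h2 := hq.snd_eq
  rw [List.length_nil] at h1
  rw [List.getD_nil] at h2
  ext <;> simp <;> omega

theorem addable_first_row_end {l : List ℕ} (hs : IsShifted (cells l)) :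
    Addable (cells l) (1, l.getD 0 0 + 1) := by
  refine ⟨by simp [mem_cells], ?_, ?_, ?_⟩
  · rintro p (rfl | hp)
    exacts [by simp, hs.1 p hp]
  · rintro p (rfl | hp) hlt
    · exact Set.mem_insert_of_mem _ (by simp only [mem_cells, Nat.sub_self] at hlt ⊢; omega)
    · exact Set.mem_insert_of_mem _ (hs.2.1 p hp hlt)
  · rintro p (rfl | hp) hlt
    · simp at hlt
    · exact Set.mem_insert_of_mem _ (hs.2.2 p hp hlt)

theorem sqrt_mul_succ_strictMono : StrictMono fun σ : ℕ => √((σ : ℝ) * (σ + 1)) :=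
  fun a b hab => Real.sqrt_lt_sqrt (by positivity) (by
    have : (a : ℝ) < b := by exact_mod_cast hab
    nlinarith)

theorem sqc_eq_sqc_iff {q q' : ℕ × ℕ} : sqc q = sqc q' ↔ q.2 - q.1 = q'.2 - q'.1 := by
  rw [sqc, sqc, Complex.ofReal_inj]
  exact sqrt_mul_succ_strictMono.injective.eq_iff

theorem sqc_eq_zero_iff {q : ℕ × ℕ} : sqc q = 0 ↔ q.2 - q.1 = 0 := by
  have : sqc (0, 0) = 0 := by simp [sqc]
  rw [← this, sqc_eq_sqc_iff]
  simp

theorem sqc_eq_zero_of_eq_neg {q q' : ℕ × ℕ} (h : sqc q = -sqc q') : sqc q = 0 := by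
  rw [sqc, sqc, ← Complex.ofReal_neg, Complex.ofReal_inj] at h
  have := Real.sqrt_nonneg (((q.2 - q.1 : ℕ) : ℝ) * ((q.2 - q.1 : ℕ) + 1))
  have := Real.sqrt_nonneg (((q'.2 - q'.1 : ℕ) : ℝ) * ((q'.2 - q'.1 : ℕ) + 1))
  rw [sqc, Complex.ofReal_eq_zero]
  linarith

theorem sign_mul_sqc_inj {q q' : ℕ × ℕ} {b b' : Prop} (hb : b → q.2 - q.1 ≠ 0)
    (hb' : b' → q'.2 - q'.1 ≠ 0)
    (h : (if b then -1 else 1 : ℂ) * sqc q = (if b' then -1 else 1) * sqc q') :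
    (b ↔ b') ∧ q.2 - q.1 = q'.2 - q'.1 := by
  by_cases hq : b <;> by_cases hq' : b' <;> simp only [hq, hq', if_true, if_false] at h
  · exact ⟨iff_of_true hq hq', sqc_eq_sqc_iff.mp (by linear_combination -h)⟩
  · have := sqc_eq_zero_of_eq_neg (q' := q') (by linear_combination -h)
    exact absurd (sqc_eq_zero_iff.mp this) (hb hq)
  · have := sqc_eq_zero_of_eq_neg (q' := q) (by linear_combination h)
    exact absurd (sqc_eq_zero_iff.mp this) (hb' hq')
  · exact ⟨iff_of_false hq hq', sqc_eq_sqc_iff.mp (by linear_combination h)⟩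

theorem mem_bVals {r : ℕ} {S : Set (ℕ × ℕ)} (hS : S.Finite) (hr : S.ncard ≤ r) {b : ℂ} :
    b ∈ bVals r S ↔ ∃ q, Addable S q ∧ (b = sqc q ∨ q.1 ≠ q.2 ∧ b = -sqc q) := by
  simp only [bVals, Finset.mem_biUnion, Finset.mem_filter, Finset.mem_product, Finset.mem_Icc]
  refine exists_congr fun q => ⟨fun ⟨⟨_, hq⟩, hb⟩ => ⟨hq, ?_⟩, fun ⟨hq, hb⟩ => ⟨⟨?_, hq⟩, ?_⟩⟩
  · split_ifs at hb with hd <;> simp_all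
  · have := hq.one_le_fst; have := hq.fst_le_snd; have := hq.snd_le_ncard_add_one hS
    omega
  · split_ifs with hd <;> simp_all

theorem bVals_congr {r r' : ℕ} {S : Set (ℕ × ℕ)} (hS : S.Finite) (hr : S.ncard ≤ r)
    (hr' : S.ncard ≤ r') : bVals r S = bVals r' S := by
  ext b
  rw [mem_bVals hS hr, mem_bVals hS hr']

theorem bVals_empty_subset (r : ℕ) : bVals r ∅ ⊆ {0} := by
  intro b hb
  obtain ⟨q, hq, hb⟩ := (mem_bVals Set.finite_empty (by simp)).mp hb
  obtain rfl := addable_empty hq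
  simp_all [sqc]

namespace SBT

section Basic

variable {n : ℕ} (U : SBT n)

theorem entry_mem_Icc {p : ℕ × ℕ} (hp : p ∈ cells U.lam) : U.entry p ∈ Set.Icc 1 n := U.bij.1 hp

theorem entry_le (p : ℕ × ℕ) : U.entry p ≤ n := by
  by_cases hp : p ∈ cells U.lam
  · exact (U.entry_mem_Icc hp).2
  · rw [U.entry_junk p hp]; exact Nat.zero_le n

theorem mem_cells_iff_entry_ne_zero {p : ℕ × ℕ} : p ∈ cells U.lam ↔ U.entry p ≠ 0 :=
  ⟨fun hp => Nat.one_le_iff_ne_zero.mp (U.entry_mem_Icc hp).1, not_imp_comm.mp (U.entry_junk p)⟩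

theorem ext_of_entry {V : SBT n} (he : U.entry = V.entry) (hb : U.barred = V.barred) :
    U = V := by
  have hc : cells U.lam = cells V.lam := by
    ext p
    rw [U.mem_cells_iff_entry_ne_zero, V.mem_cells_iff_entry_ne_zero, he]
  have hl := List.eq_of_getD_eq U.pos V.pos (getD_eq_of_cells_eq hc)
  cases U; cases V
  simp only at hl he hb
  subst hl he hb
  rfl

theorem box_spec {a : ℕ} (ha : a ∈ Set.Icc 1 n) :
    U.box a ∈ cells U.lam ∧ U.entry (U.box a) = a := by
  have hex : ∃ p ∈ cells U.lam, U.entry p = a := U.bij.2.2 ha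
  rw [SBT.box, dif_pos hex]
  exact hex.choose_spec

theorem box_eq_iff {a : ℕ} (ha : a ∈ Set.Icc 1 n) {p : ℕ × ℕ} :
    U.box a = p ↔ U.entry p = a := by
  refine ⟨fun h => h ▸ (U.box_spec ha).2, fun h => ?_⟩
  have hp : p ∈ cells U.lam := U.mem_cells_iff_entry_ne_zero.mpr (by rw [h]; have := ha.1; omega)
  exact U.bij.2.1 (U.box_spec ha).1 hp ((U.box_spec ha).2.trans h.symm)

theorem kappa_eq (a : ℕ) :
    U.kappa a = (if a ∈ U.barred then -1 else 1) * sqc (U.box a) := rfl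

theorem content_ne_zero_of_mem_barred {a : ℕ} (ha : a ∈ U.barred) :
    (U.box a).2 - (U.box a).1 ≠ 0 := by
  obtain ⟨hp, he⟩ := U.box_spec (U.barred_sub ha)
  have := U.barred_nondiag _ hp (by rw [he]; exact ha)
  have := hp.2.1
  omega

theorem shapeAt_self : U.shapeAt n = cells U.lam :=
  Set.ext fun p => ⟨fun hp => hp.1, fun hp => ⟨hp, U.entry_le p⟩⟩

theorem shapeAt_zero : U.shapeAt 0 = ∅ :=
  Set.eq_empty_of_forall_notMem fun p hp => by have := (U.entry_mem_Icc hp.1).1; have := hp.2; omega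

theorem isShifted_shapeAt (k : ℕ) : IsShifted (U.shapeAt k) := by
  have hcells := isShifted_cells U.sorted
  refine ⟨fun p hp => hcells.1 p hp.1, fun p hp hlt => ?_, fun p hp hlt => ?_⟩
  · have hl := hcells.2.1 p hp.1 hlt
    have e : (p.1, p.2 - 1 + 1) = p := by ext <;> dsimp only; omega
    have := U.row_incr _ hl (by simpa only [e] using hp.1)
    simp only [e] at this
    exact ⟨hl, by have := hp.2; omega⟩
  · have hu := hcells.2.2 p hp.1 hlt
    have e : (p.1 - 1 + 1, p.2) = p := by ext <;> dsimp only; omega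
    have := U.col_incr _ hu (by simpa only [e] using hp.1)
    simp only [e] at this
    exact ⟨hu, by have := hp.2; omega⟩

theorem bijOn_shapeAt {k : ℕ} (hk : k ≤ n) :
    Set.BijOn U.entry (U.shapeAt k) (Set.Icc 1 k) := by
  refine ⟨fun p hp => ⟨(U.entry_mem_Icc hp.1).1, hp.2⟩,
    fun p hp p' hp' h => U.bij.2.1 hp.1 hp'.1 h, fun a ha => ?_⟩
  obtain ⟨p, hp, rfl⟩ := U.bij.2.2 ⟨ha.1, ha.2.trans hk⟩
  exact ⟨p, ⟨hp, ha.2⟩, rfl⟩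

theorem ncard_shapeAt {k : ℕ} (hk : k ≤ n) : (U.shapeAt k).ncard = k := by
  rw [← (U.bijOn_shapeAt hk).injOn.ncard_image, (U.bijOn_shapeAt hk).image_eq,
    ← Finset.coe_Icc, Set.ncard_coe_finset, Nat.card_Icc, Nat.add_sub_cancel]

theorem finite_shapeAt (k : ℕ) : (U.shapeAt k).Finite :=
  have h := U.bijOn_shapeAt le_rfl
  (Set.Finite.of_finite_image (h.image_eq ▸ Set.finite_Icc 1 n) h.injOn).subset
    fun _ hp => U.shapeAt_self ▸ hp.1

theorem shapeAt_succ {k : ℕ} (hk : k + 1 ≤ n) :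
    U.shapeAt (k + 1) = insert (U.box (k + 1)) (U.shapeAt k) := by
  ext p
  rw [Set.mem_insert_iff, eq_comm, U.box_eq_iff ⟨by omega, hk⟩]
  change p ∈ cells U.lam ∧ U.entry p ≤ k + 1 ↔ U.entry p = k + 1 ∨ p ∈ cells U.lam ∧ U.entry p ≤ k
  constructor
  · rintro ⟨hp, hle⟩
    rcases hle.lt_or_eq with h | h
    exacts [Or.inr ⟨hp, by omega⟩, Or.inl h]
  · rintro (h | ⟨hp, hle⟩)
    · exact ⟨U.mem_cells_iff_entry_ne_zero.mpr (by omega), h.le⟩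
    · exact ⟨hp, by omega⟩

theorem box_addable {k : ℕ} (hk : k + 1 ≤ n) : Addable (U.shapeAt k) (U.box (k + 1)) :=
  ⟨fun h => by have := h.2; rw [(U.box_spec ⟨by omega, hk⟩).2] at this; omega,
    U.shapeAt_succ hk ▸ U.isShifted_shapeAt (k + 1)⟩

theorem kappa_mem_bVals {k : ℕ} (hk : k + 1 ≤ n) : U.kappa (k + 1) ∈ bVals n (U.shapeAt k) := by
  rw [mem_bVals (U.finite_shapeAt k) (by rw [U.ncard_shapeAt (by omega)]; omega)]
  refine ⟨_, U.box_addable hk, ?_⟩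
  rw [kappa_eq]
  by_cases hb : k + 1 ∈ U.barred
  · have := U.content_ne_zero_of_mem_barred hb
    exact Or.inr ⟨by omega, by simp [hb]⟩
  · exact Or.inl (by simp [hb])

theorem bVals_nonempty : (bVals (n + 1) (cells U.lam)).Nonempty := by
  have hq := addable_first_row_end (isShifted_cells U.sorted)
  rw [← U.shapeAt_self] at hq ⊢
  exact ⟨_, (mem_bVals (U.finite_shapeAt n) (by rw [U.ncard_shapeAt le_rfl]; omega)).mpr
    ⟨_, hq, Or.inl rfl⟩⟩

end Basic

section Restriction

variable {m : ℕ} (U : SBT (m + 1))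

theorem lt_length_of_box_top : (U.box (m + 1)).1 - 1 < U.lam.length := by
  have hp := (U.box_spec ⟨by omega, le_rfl⟩).1
  rw [mem_cells] at hp
  exact List.lt_length_of_getD_pos (by omega)

theorem cells_shrinkRow_box_top :
    cells (U.lam.shrinkRow ((U.box (m + 1)).1 - 1)) = U.shapeAt m := by
  have htop : m + 1 ∈ Set.Icc 1 (m + 1) := ⟨by omega, le_rfl⟩
  obtain ⟨hp, he⟩ := U.box_spec htop
  -- `m + 1` is the largest entry, so its box ends its row.
  have hcorner : (U.box (m + 1)).1 - 1 + 1 = (U.box (m + 1)).1 ∧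
      U.lam.getD ((U.box (m + 1)).1 - 1) 0 + ((U.box (m + 1)).1 - 1) = (U.box (m + 1)).2 := by
    have hnot : ((U.box (m + 1)).1, (U.box (m + 1)).2 + 1) ∉ cells U.lam := fun h => by
      have := U.row_incr _ hp h
      have := U.entry_le ((U.box (m + 1)).1, (U.box (m + 1)).2 + 1)
      omega
    simp only [mem_cells] at hp hnot
    omega
  rw [cells_shrinkRow U.sorted, hcorner.1, hcorner.2]
  ext p
  change p ∈ cells U.lam ∧ p ≠ U.box (m + 1) ↔ p ∈ cells U.lam ∧ U.entry p ≤ m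
  rw [ne_comm, Ne, U.box_eq_iff htop]
  have := U.entry_le p
  exact and_congr_right fun _ => by omega

/-- The restriction of `U` to the entries `1, …, m`: the box of `m + 1` is removed. -/
def res : SBT m where
  lam := U.lam.shrinkRow ((U.box (m + 1)).1 - 1)
  sorted := pairwise_of_isShifted_cells (List.pos_shrinkRow U.pos U.lt_length_of_box_top)
    (U.cells_shrinkRow_box_top ▸ U.isShifted_shapeAt m)
  pos := List.pos_shrinkRow U.pos U.lt_length_of_box_top
  sum_eq := by
    have := List.sum_shrinkRow U.sorted U.pos U.lt_length_of_box_top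
    rw [U.sum_eq] at this
    omega
  entry p := if U.entry p = m + 1 then 0 else U.entry p
  bij := by
    rw [U.cells_shrinkRow_box_top]
    refine (U.bijOn_shapeAt m.le_succ).congr fun p hp => ?_
    have := hp.2
    exact (if_neg (by omega)).symm
  entry_junk p hp := by
    rw [U.cells_shrinkRow_box_top] at hp
    by_cases hc : p ∈ cells U.lam
    · have := U.entry_le p
      have : ¬ U.entry p ≤ m := fun h => hp ⟨hc, h⟩
      exact if_pos (by omega)
    · simp [U.entry_junk p hc]
  row_incr p hp hp' := by
    rw [U.cells_shrinkRow_box_top] at hp hp'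
    have := hp.2
    have := hp'.2
    rw [if_neg (by omega), if_neg (by omega)]
    exact U.row_incr p hp.1 hp'.1
  col_incr p hp hp' := by
    rw [U.cells_shrinkRow_box_top] at hp hp'
    have := hp.2
    have := hp'.2
    rw [if_neg (by omega), if_neg (by omega)]
    exact U.col_incr p hp.1 hp'.1
  barred := U.barred \ {m + 1}
  barred_sub a ha := by
    obtain ⟨h1, h2⟩ := U.barred_sub ha.1
    have : a ≠ m + 1 := ha.2
    exact ⟨h1, by omega⟩
  barred_nondiag p hp ha := by
    rw [U.cells_shrinkRow_box_top] at hp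
    have := hp.2
    rw [if_neg (by omega)] at ha
    exact U.barred_nondiag p hp.1 ha.1

theorem cells_res : cells U.res.lam = U.shapeAt m := U.cells_shrinkRow_box_top

theorem res_entry (p : ℕ × ℕ) : U.res.entry p = if U.entry p = m + 1 then 0 else U.entry p := rfl

theorem res_barred : U.res.barred = U.barred \ {m + 1} := rfl

theorem box_res {a : ℕ} (ha : a ∈ Set.Icc 1 m) : U.res.box a = U.box a := by
  have := ha.2
  rw [U.res.box_eq_iff ha, res_entry, (U.box_spec ⟨ha.1, by omega⟩).2, if_neg (by omega)]

theorem kappa_res {a : ℕ} (ha : a ∈ Set.Icc 1 m) : U.res.kappa a = U.kappa a := by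
  have : a ≠ m + 1 := by have := ha.2; omega
  simp only [kappa_eq, box_res U ha, res_barred, Set.mem_sdiff, Set.mem_singleton_iff, this,
    not_false_eq_true, and_true]

theorem shapeAt_res {k : ℕ} (hk : k ≤ m) : U.res.shapeAt k = U.shapeAt k := by
  ext p
  change p ∈ cells U.res.lam ∧ U.res.entry p ≤ k ↔ p ∈ cells U.lam ∧ U.entry p ≤ k
  rw [cells_res, res_entry]
  constructor
  · rintro ⟨⟨hc, hm⟩, hle⟩
    rw [if_neg (by omega)] at hle
    exact ⟨hc, hle⟩
  · rintro ⟨hc, hle⟩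
    exact ⟨⟨hc, by omega⟩, by rwa [if_neg (by omega)]⟩

theorem eq_of_res_eq {U U' : SBT (m + 1)} (h : U.res = U'.res)
    (hbox : U.box (m + 1) = U'.box (m + 1)) (hbar : m + 1 ∈ U.barred ↔ m + 1 ∈ U'.barred) :
    U = U' := by
  have htop : ∀ p, U.entry p = m + 1 ↔ U'.entry p = m + 1 := fun p => by
    rw [← U.box_eq_iff ⟨by omega, le_rfl⟩, ← U'.box_eq_iff ⟨by omega, le_rfl⟩, hbox]
  refine U.ext_of_entry (funext fun p => ?_) (Set.ext fun a => ?_)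
  · have := congrArg (fun W : SBT m => W.entry p) h
    simp only [res_entry] at this
    by_cases hp : U.entry p = m + 1
    · rw [hp, (htop p).mp hp]
    · rwa [if_neg hp, if_neg (mt (htop p).mpr hp)] at this
  · by_cases ha : a = m + 1
    · subst ha
      exact hbar
    · have := congrArg (fun W : SBT m => a ∈ W.barred) h
      simpa [res_barred, ha] using this

theorem box_eq_of_kappa_eq {U U' : SBT (m + 1)} (hs : U.shapeAt m = U'.shapeAt m)
    (hk : U.kappa (m + 1) = U'.kappa (m + 1)) :
    U.box (m + 1) = U'.box (m + 1) ∧ (m + 1 ∈ U.barred ↔ m + 1 ∈ U'.barred) := by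
  rw [kappa_eq, kappa_eq] at hk
  obtain ⟨hbar, hc⟩ := sign_mul_sqc_inj U.content_ne_zero_of_mem_barred
    U'.content_ne_zero_of_mem_barred hk
  exact ⟨(U.box_addable le_rfl).eq_of_content_eq (hs ▸ U'.box_addable le_rfl) hc, hbar⟩

theorem eq_of_res_eq_of_kappa_eq {U U' : SBT (m + 1)} (h : U.res = U'.res)
    (hk : U.kappa (m + 1) = U'.kappa (m + 1)) : U = U' := by
  have hs : U.shapeAt m = U'.shapeAt m := by rw [← cells_res, ← cells_res, h]
  obtain ⟨hbox, hbar⟩ := box_eq_of_kappa_eq hs hk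
  exact eq_of_res_eq h hbox hbar

end Restriction

section Extension

variable {m : ℕ} (V : SBT m) {q : ℕ × ℕ} (hq : Addable (cells V.lam) q) (bar : Bool)
  (hbar : bar = true → q.1 ≠ q.2)

/-- Place the entry `m + 1`, barred iff `bar`, in the addable box `q` of `V`. -/
def extend : SBT (m + 1) where
  lam := V.lam.growRow (q.1 - 1)
  sorted := pairwise_of_isShifted_cells (List.pos_growRow V.pos _) (hq.cells_growRow ▸ hq.2)
  pos := List.pos_growRow V.pos _
  sum_eq := by rw [List.sum_growRow hq.fst_sub_one_le_length, V.sum_eq]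
  entry p := if p = q then m + 1 else V.entry p
  bij := by
    rw [hq.cells_growRow, ← Set.insert_Icc_right_eq_Icc_add_one (by omega)]
    have hV : Set.BijOn (fun p => if p = q then m + 1 else V.entry p) (cells V.lam)
        (Set.Icc 1 m) :=
      V.bij.congr fun p hp => (if_neg (ne_of_mem_of_not_mem hp hq.1)).symm
    simpa using hV.insert (a := q) (by simp)
  entry_junk p hp := by
    rw [hq.cells_growRow, Set.mem_insert_iff, not_or] at hp
    simp [hp.1, V.entry_junk p hp.2]
  row_incr p hp hp' := by
    rw [hq.cells_growRow] at hp hp'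
    rcases hp with rfl | hp
    · have hr := hp'.resolve_left fun h => by simp [Prod.ext_iff] at h
      have := hq.one_le_fst
      have := hq.fst_le_snd
      exact absurd (by simp only [mem_cells] at hr ⊢; omega) hq.1
    · rw [if_neg (ne_of_mem_of_not_mem hp hq.1)]
      rcases hp' with h | hp'
      · rw [if_pos h]; have := V.entry_le p; omega
      · rw [if_neg (ne_of_mem_of_not_mem hp' hq.1)]; exact V.row_incr p hp hp'
  col_incr p hp hp' := by
    rw [hq.cells_growRow] at hp hp'
    rcases hp with rfl | hp
    · have hr := hp'.resolve_left fun h => by simp [Prod.ext_iff] at h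
      have hup := (isShifted_cells V.sorted).up_mem hr hq.one_le_fst (by simp)
      exact absurd (by simpa using hup) hq.1
    · rw [if_neg (ne_of_mem_of_not_mem hp hq.1)]
      rcases hp' with h | hp'
      · rw [if_pos h]; have := V.entry_le p; omega
      · rw [if_neg (ne_of_mem_of_not_mem hp' hq.1)]; exact V.col_incr p hp hp'
  barred := if bar then insert (m + 1) V.barred else V.barred
  barred_sub a ha := by
    split_ifs at ha
    · rcases ha with rfl | ha
      · exact ⟨by omega, le_rfl⟩
      · exact ⟨(V.barred_sub ha).1, (V.barred_sub ha).2.trans m.le_succ⟩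
    · exact ⟨(V.barred_sub ha).1, (V.barred_sub ha).2.trans m.le_succ⟩
  barred_nondiag p hp ha := by
    rw [hq.cells_growRow] at hp
    rcases hp with rfl | hp
    · rw [if_pos rfl] at ha
      split_ifs at ha with hb
      · exact hbar hb
      · exact absurd (V.barred_sub ha).2 (by omega)
    · rw [if_neg (ne_of_mem_of_not_mem hp hq.1)] at ha
      have := V.entry_le p
      split_ifs at ha
      · exact V.barred_nondiag p hp (ha.resolve_left (by omega))
      · exact V.barred_nondiag p hp ha

theorem box_extend : (V.extend hq bar hbar).box (m + 1) = q :=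
  ((V.extend hq bar hbar).box_eq_iff ⟨by omega, le_rfl⟩).mpr (if_pos rfl)

theorem kappa_extend :
    (V.extend hq bar hbar).kappa (m + 1) = (if bar then -1 else 1) * sqc q := by
  have : m + 1 ∉ V.barred := fun h => by have := (V.barred_sub h).2; omega
  rw [kappa_eq, box_extend]
  cases bar <;> simp [extend, this]

theorem res_extend : (V.extend hq bar hbar).res = V := by
  refine ext_of_entry _ (funext fun p => ?_) ?_
  · rw [res_entry]
    change (if (if p = q then m + 1 else V.entry p) = m + 1 then 0
      else if p = q then m + 1 else V.entry p) = V.entry p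
    by_cases hp : p = q
    · subst hp
      simp [V.entry_junk _ hq.1]
    · have := V.entry_le p
      simp [hp, show V.entry p ≠ m + 1 by omega]
  · have : m + 1 ∉ V.barred := fun h => by have := (V.barred_sub h).2; omega
    rw [res_barred]
    cases bar <;> simp [extend, this]

end Extension

theorem exists_res_eq_kappa_eq {m : ℕ} (V : SBT m) {b : ℂ}
    (hb : b ∈ bVals (m + 1) (cells V.lam)) :
    ∃ U : SBT (m + 1), U.res = V ∧ U.kappa (m + 1) = b := by
  rw [← V.shapeAt_self, mem_bVals (V.finite_shapeAt m) (by rw [V.ncard_shapeAt le_rfl]; omega),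
    V.shapeAt_self] at hb
  obtain ⟨q, hq, rfl | ⟨hd, rfl⟩⟩ := hb
  · exact ⟨V.extend hq false (by simp), V.res_extend .., by simp [kappa_extend]⟩
  · exact ⟨V.extend hq true fun _ => hd, V.res_extend .., by simp [kappa_extend]⟩

def empty : SBT 0 where
  lam := []
  sorted := List.Pairwise.nil
  pos := by simp
  sum_eq := rfl
  entry _ := 0
  bij := by
    rw [cells_nil, Set.Icc_eq_empty (by norm_num)]
    exact Set.bijOn_empty _
  entry_junk _ _ := rfl
  row_incr p hp := by rw [cells_nil] at hp; exact absurd hp (Set.notMem_empty p)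
  col_incr p hp := by rw [cells_nil] at hp; exact absurd hp (Set.notMem_empty p)
  barred := ∅
  barred_sub := Set.empty_subset _
  barred_nondiag p hp := by rw [cells_nil] at hp; exact absurd hp (Set.notMem_empty p)

instance : Unique (SBT 0) where
  default := empty
  uniq U := by
    have hl : U.lam = [] := List.eq_nil_iff_forall_not_mem.mpr fun x hx => by
      have := U.pos x hx
      have := List.le_sum_of_mem hx
      have := U.sum_eq
      omega
    refine U.ext_of_entry (funext fun p => U.entry_junk p ?_) ?_
    · rw [hl, cells_nil]; exact Set.notMem_empty p
    · exact Set.eq_empty_of_forall_notMem fun a ha => by have := U.barred_sub ha; simp at this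

theorem finite (n : ℕ) : Finite (SBT n) := by
  induction n with
  | zero => infer_instance
  | succ m ih =>
    have := Fintype.ofFinite (SBT m)
    let T : Finset ℂ := Finset.univ.biUnion fun V : SBT m => bVals (m + 1) (cells V.lam)
    refine Finite.of_injective (β := SBT m × T) (fun U => (U.res, ⟨U.kappa (m + 1),
      Finset.mem_biUnion.mpr ⟨U.res, Finset.mem_univ _, ?_⟩⟩)) fun U U' h => ?_
    · rw [cells_res]; exact U.kappa_mem_bVals le_rfl
    · simp only [Prod.mk.injEq, Subtype.mk.injEq] at h
      exact eq_of_res_eq_of_kappa_eq h.1 h.2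

instance (n : ℕ) : Finite (SBT n) := finite n

instance (n : ℕ) : Fintype (SBT n) := Fintype.ofFinite _

theorem sum_res_eq {M : Type*} [AddCommMonoid M] {m : ℕ} (V : SBT m) (f : ℂ → M) :
    ∑ U : SBT (m + 1) with U.res = V, f (U.kappa (m + 1)) =
      ∑ b ∈ bVals (m + 1) (cells V.lam), f b := by
  refine Finset.sum_nbij (fun U => U.kappa (m + 1)) (fun U hU => ?_) (fun U hU U' hU' h => ?_)
    (fun b hb => ?_) fun _ _ => rfl
  · rw [← (Finset.mem_filter.mp hU).2, cells_res]
    exact U.kappa_mem_bVals le_rfl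
  · rw [Finset.mem_coe, Finset.mem_filter] at hU hU'
    exact eq_of_res_eq_of_kappa_eq (hU.2.trans hU'.2.symm) h
  · obtain ⟨U, hU, hk⟩ := exists_res_eq_kappa_eq V hb
    exact ⟨U, by simp [hU], hk⟩

section Idempotents

open Polynomial

theorem eAux_succ (N : ℕ) {r : ℕ} (U : SBT r) {k : ℕ} (hk : k + 1 ≤ r) :
    eAux N U (k + 1) = eAux N U k *
      aeval (xS N (k + 1)) (Lagrange.basis (bVals r (U.shapeAt k)) id (U.kappa (k + 1))) := by
  cases k with
  | zero =>
    -- The empty shape has the single addable box `(1, 1)`, so a single node and `L = 1`.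
    have hmem := U.kappa_mem_bVals hk
    rw [U.shapeAt_zero] at hmem ⊢
    have hsingle : bVals r ∅ = {U.kappa (0 + 1)} :=
      Finset.eq_singleton_iff_unique_mem.mpr ⟨hmem, fun b hb =>
        (Finset.mem_singleton.mp (bVals_empty_subset r hb)).trans
          (Finset.mem_singleton.mp (bVals_empty_subset r hmem)).symm⟩
    rw [hsingle, Lagrange.basis_singleton, map_one, mul_one]
    rfl
  | succ k =>
    rw [Lagrange.basis, Finset.erase_eq]
    rfl

theorem eAux_res (N : ℕ) {m : ℕ} (U : SBT (m + 1)) {k : ℕ} (hk : k ≤ m) :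
    eAux N U.res k = eAux N U k := by
  induction k with
  | zero => rfl
  | succ k ih =>
    have hcard := U.ncard_shapeAt (k := k) (by omega)
    rw [eAux_succ N U.res hk, eAux_succ N U (by omega), ih (by omega), U.shapeAt_res (by omega),
      U.kappa_res ⟨by omega, hk⟩, bVals_congr (r' := m + 1) (U.finite_shapeAt k) (by omega)
        (by omega)]

theorem eAux_eq_eAux_res_mul (N : ℕ) {m : ℕ} (U : SBT (m + 1)) :
    eAux N U (m + 1) = eAux N U.res m * aeval (xS N (m + 1))
      (Lagrange.basis (bVals (m + 1) (cells U.res.lam)) id (U.kappa (m + 1))) := by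
  rw [eAux_succ N U le_rfl, eAux_res N U le_rfl, cells_res]

theorem sum_eAux (N : ℕ) : ∀ m, ∑ U : SBT m, eAux N U m = 1
  | 0 => by rw [Fintype.sum_unique]; rfl
  | m + 1 => by
    rw [← Finset.sum_fiberwise Finset.univ res, ← sum_eAux N m]
    refine Finset.sum_congr rfl fun V _ => ?_
    let L := Lagrange.basis (bVals (m + 1) (cells V.lam)) id
    calc ∑ U : SBT (m + 1) with U.res = V, eAux N U (m + 1)
        = ∑ U : SBT (m + 1) with U.res = V,
            eAux N V m * aeval (xS N (m + 1)) (L (U.kappa (m + 1))) :=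
          Finset.sum_congr rfl fun U hU => by
            rw [eAux_eq_eAux_res_mul, (Finset.mem_filter.mp hU).2]
      _ = eAux N V m * aeval (xS N (m + 1)) (∑ b ∈ bVals (m + 1) (cells V.lam), L b) := by
          rw [sum_res_eq V fun b => eAux N V m * aeval (xS N (m + 1)) (L b), map_sum,
            Finset.mul_sum]
      _ = eAux N V m := by
          rw [Lagrange.sum_basis (Set.injOn_id _) V.bVals_nonempty, map_one, mul_one]

end Idempotents

end SBT

theorem statement3_general (n : ℕ) : ∑ᶠ U : SBT n, eU U = 1 := by
  rw [finsum_eq_sum_of_fintype]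
  exact SBT.sum_eAux n n

/-- The idempotents `e_U` form a decomposition of the identity in the Sergeev
superalgebra: `1 = Σ_λ Σ_U e_U`, the (finite) sum over all standard barred tableaux
with `n` boxes of all strict-partition shapes `λ` of `n`. -/
theorem statement3 (n : ℕ) (hn : 1 ≤ n) : ∑ᶠ U : SBT n, eU U = 1 :=
  statement3_general n
end
end

section
/- Let U be a standard barred tableau with n boxes. If a is an unbarred non-diagonal entry of U and U' is the tableau obtained from U by replacing a with ā, then e_U c_a = c_a e_{U'} and e_{U'} c_a = c_a e_U in the Sergeev superalgebra S_n. Moreover, if d is a diagonal entry of U, then e_U c_d = c_d e_U. -/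
open scoped Classical

noncomputable section

/-!
Conjugation by `c_a` negates `x_a` and fixes every other `x_m`, because `c_a` anticommutes
with every `t_{km}` and with every `c_m`, `m ≠ a`. Hence `c_a f(x_a) = f(-x_a) c_a` for every
polynomial `f`. The set of candidate signed contents at each step of the recursion for `e_U` is
symmetric under negation, so replacing `x_a` by `-x_a` in the factor attached to `κ` gives the
factor attached to `-κ`. Moving `c_a` through `e_U` factor by factor therefore flips the sign
of `κ_a`, i.e. toggles the bar on `a`. A diagonal entry has `κ_d = 0`, so there `c_d` commutes
with `e_U`.
-/

section Anticommutation

variable {R : Type*} [Ring R] {c : R}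

theorem SemiconjBy.list_prod_neg {l : List R} (h : ∀ x ∈ l, SemiconjBy c x (-x)) :
    SemiconjBy c l.prod ((-1) ^ l.length * l.prod) := by
  rw [← List.prod_map_neg]
  induction l with
  | nil => exact SemiconjBy.one_right c
  | cons x l ih =>
    simp only [List.prod_cons, List.map_cons]
    exact (h x List.mem_cons_self).mul_right (ih fun y hy => h y (List.mem_cons_of_mem x hy))

theorem SemiconjBy.mul_mul_neg_of_neg_one_pow {p t q : R} (m : ℕ)
    (hp : SemiconjBy c p ((-1) ^ m * p)) (ht : SemiconjBy c t (-t))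
    (hq : SemiconjBy c q ((-1) ^ m * q)) : SemiconjBy c (p * t * q) (-(p * t * q)) := by
  have h := (hp.mul_right ht).mul_right hq
  rcases neg_one_pow_eq_or R m with hm | hm <;> simpa [hm] using h

theorem SemiconjBy.finset_sum_neg {ι : Type*} {s : Finset ι} {f : ι → R}
    (h : ∀ i ∈ s, SemiconjBy c (f i) (-f i)) :
    SemiconjBy c (∑ i ∈ s, f i) (-∑ i ∈ s, f i) :=
  Finset.sum_induction f (fun x => SemiconjBy c x (-x))
    (fun x y hx hy => by simpa only [neg_add] using hx.add_right hy)
    (by simp) h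

theorem SemiconjBy.smul_neg {S A : Type*} [CommRing S] [Ring A] [Algebra S A] {c x : A}
    (h : SemiconjBy c x (-x)) (r : S) : SemiconjBy c (r • x) (-(r • x)) := by
  simp only [SemiconjBy, mul_smul_comm, smul_mul_assoc, h.eq, neg_mul, _root_.smul_neg]

theorem SemiconjBy.aeval {S A : Type*} [CommSemiring S] [Semiring A] [Algebra S A] {c x y : A}
    (h : SemiconjBy c x y) (p : Polynomial S) :
    SemiconjBy c (Polynomial.aeval x p) (Polynomial.aeval y p) := by
  induction p using Polynomial.induction_on' with
  | add p q hp hq => simpa only [map_add] using hp.add_right hq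
  | monomial m r =>
    simp only [Polynomial.aeval_monomial]
    exact SemiconjBy.mul_right (Algebra.commutes r c).symm (h.pow_right m)

end Anticommutation

section Relations

variable {n : ℕ}

theorem semiconjBy_cS_tS (a b : ℕ) : SemiconjBy (cS n b) (tS n a) (-tS n a) := by
  by_cases ha : 1 ≤ a ∧ a < n
  · by_cases hb : 1 ≤ b ∧ b ≤ n
    · have h := RingQuot.mkAlgHom_rel ℂ (SRel.tc a b ha.1 ha.2 hb.1 hb.2)
      simp only [map_mul, map_neg] at h
      rw [← tS, ← cS] at h
      rw [SemiconjBy, neg_mul (tS n a), h, neg_neg]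
    · simp [cS, cf, hb]
  · simp [tS, tf, ha]

theorem semiconjBy_cS_cS {a b : ℕ} (hab : a ≠ b) : SemiconjBy (cS n a) (cS n b) (-cS n b) := by
  by_cases ha : 1 ≤ a ∧ a ≤ n
  · by_cases hb : 1 ≤ b ∧ b ≤ n
    · have h := RingQuot.mkAlgHom_rel ℂ (SRel.canti a b ha.1 ha.2 hb.1 hb.2 hab)
      simp only [map_mul, map_neg] at h
      rw [← cS, ← cS] at h
      rw [SemiconjBy, neg_mul (cS n b), h]
    · simp [cS, cf, hb]
  · simp [cS, cf, ha]

theorem semiconjBy_cS_ttS (b k m : ℕ) : SemiconjBy (cS n b) (ttS n k m) (-ttS n k m) := by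
  have hprod (l : List ℕ) : SemiconjBy (cS n b) (l.map (tS n)).prod
      ((-1) ^ l.length * (l.map (tS n)).prod) := by
    simpa only [List.length_map] using SemiconjBy.list_prod_neg (l := l.map (tS n))
      (by simpa only [List.forall_mem_map] using fun a _ => semiconjBy_cS_tS a b)
  set l := List.range' (k + 1) (m - 1 - k)
  refine SemiconjBy.smul_neg (SemiconjBy.mul_mul_neg_of_neg_one_pow l.length ?_
    (semiconjBy_cS_tS k b) (hprod l)) _
  simpa only [List.length_reverse] using hprod l.reverse

theorem semiconjBy_cS_mS (b m : ℕ) : SemiconjBy (cS n b) (mS n m) (-mS n m) := by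
  refine SemiconjBy.finset_sum_neg fun k _ => ?_
  unfold tsgn
  split_ifs
  · exact semiconjBy_cS_ttS b k m
  · exact (semiconjBy_cS_ttS b m k).neg_right
  · simp

theorem commute_cS_xS {a b : ℕ} (hab : a ≠ b) : Commute (cS n a) (xS n b) := by
  have h := (semiconjBy_cS_mS a b).mul_right (semiconjBy_cS_cS (n := n) hab)
  rw [neg_mul_neg (mS n b)] at h
  exact h.smul_right (Real.sqrt 2 : ℂ)

theorem semiconjBy_cS_xS_self (a : ℕ) : SemiconjBy (cS n a) (xS n a) (-xS n a) := by
  have h := (semiconjBy_cS_mS a a).mul_right (Commute.refl (cS n a))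
  rw [neg_mul (mS n a)] at h
  exact h.smul_neg (Real.sqrt 2 : ℂ)

end Relations

section Factor

open Polynomial

def jmFactor (κ : ℂ) (B : Finset ℂ) : ℂ[X] :=
  ∏ b ∈ B \ {κ}, (C ((κ - b)⁻¹) * (X - C b))

theorem jmFactor_comp_neg_X {κ : ℂ} {B : Finset ℂ} (hB : ∀ b ∈ B, -b ∈ B) :
    (jmFactor κ B).comp (-X) = jmFactor (-κ) B := by
  have hfactor : ∀ b : ℂ, (C ((κ - b)⁻¹) * (X - C b)).comp (-X)
      = C ((-κ - -b)⁻¹) * (X - C (-b)) := fun b => by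
    rw [show -κ - -b = -(κ - b) by ring, inv_neg]
    simp only [mul_comp, sub_comp, C_comp, X_comp, map_neg]
    ring
  have himage : (B \ {κ}).image Neg.neg = B \ {-κ} := by
    ext y
    simp only [Finset.mem_image, Finset.mem_sdiff, Finset.mem_singleton]
    constructor
    · rintro ⟨b, ⟨hb, hbκ⟩, rfl⟩
      exact ⟨hB b hb, by simpa using hbκ⟩
    · rintro ⟨hy, hyκ⟩
      exact ⟨-y, ⟨hB y hy, by simpa [neg_eq_iff_eq_neg] using hyκ⟩, neg_neg y⟩
  rw [jmFactor, jmFactor, ← himage, Finset.prod_image fun _ _ _ _ h => neg_injective h,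
    Polynomial.prod_comp]
  exact Finset.prod_congr rfl fun b _ => hfactor b

theorem SemiconjBy.aeval_jmFactor {A : Type*} [Ring A] [Algebra ℂ A] {c x : A}
    (h : SemiconjBy c x (-x)) (κ : ℂ) {B : Finset ℂ} (hB : ∀ b ∈ B, -b ∈ B) :
    SemiconjBy c (Polynomial.aeval x (jmFactor κ B)) (Polynomial.aeval x (jmFactor (-κ) B)) := by
  have hcomp := aeval_comp (R := ℂ) (p := jmFactor κ B) (q := -X) x
  rw [map_neg, aeval_X, jmFactor_comp_neg_X hB] at hcomp
  exact hcomp ▸ h.aeval _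

end Factor

theorem neg_mem_bVals {n : ℕ} {S : Set (ℕ × ℕ)} {b : ℂ} (hb : b ∈ bVals n S) :
    -b ∈ bVals n S := by
  rw [bVals, Finset.mem_biUnion] at hb ⊢
  obtain ⟨q, hq, hbq⟩ := hb
  refine ⟨q, hq, ?_⟩
  by_cases hdiag : q.1 = q.2
  · have hzero : sqc q = 0 := by simp [sqc, hdiag]
    simp_all
  · simp only [hdiag, if_false, Finset.mem_insert, Finset.mem_singleton] at hbq ⊢
    rcases hbq with rfl | rfl <;> simp

theorem eAux_add_two (N : ℕ) {r : ℕ} (U : SBT r) (k : ℕ) :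
    eAux N U (k + 2) = eAux N U (k + 1) *
      Polynomial.aeval (xS N (k + 2)) (jmFactor (U.kappa (k + 2)) (bVals r (U.shapeAt (k + 1)))) :=
  rfl

theorem semiconjBy_cS_eAux (N : ℕ) {r : ℕ} {U V : SBT r} {a : ℕ}
    (hshape : ∀ k, V.shapeAt k = U.shapeAt k) (hkappa : ∀ m, m ≠ a → V.kappa m = U.kappa m)
    (hkappa_a : V.kappa a = -U.kappa a) :
    ∀ k, SemiconjBy (cS N a) (eAux N V k) (eAux N U k)
  | 0 | 1 => SemiconjBy.one_right _
  | k + 2 => by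
    rw [eAux_add_two, eAux_add_two, hshape]
    refine (semiconjBy_cS_eAux N hshape hkappa hkappa_a (k + 1)).mul_right ?_
    by_cases hm : k + 2 = a
    · subst hm
      have h := (semiconjBy_cS_xS_self (n := N) (k + 2)).aeval_jmFactor (-U.kappa (k + 2))
        (B := bVals r (U.shapeAt (k + 1))) fun _ => neg_mem_bVals
      rwa [neg_neg, ← hkappa_a] at h
    · rw [hkappa _ hm]
      exact (commute_cS_xS (Ne.symm hm)).aeval _

namespace SBT

variable {n : ℕ}

theorem kappa_eq_zero_of_diag (U : SBT n) {d i : ℕ} (hi : (i, i) ∈ cells U.lam)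
    (hd : U.entry (i, i) = d) : U.kappa d = 0 := by
  have hex : ∃ p ∈ cells U.lam, U.entry p = d := ⟨(i, i), hi, hd⟩
  have hbox : U.box d = (i, i) :=
    (dif_pos hex).trans (U.bij.injOn hex.choose_spec.1 hi (hex.choose_spec.2.trans hd.symm))
  simp [kappa, content, hbox]

variable {U V : SBT n}

theorem shapeAt_eq_of_filling_eq (hlam : V.lam = U.lam) (hentry : V.entry = U.entry) (k : ℕ) :
    V.shapeAt k = U.shapeAt k := by
  rw [shapeAt, shapeAt, hlam, hentry]

theorem content_eq_of_filling_eq (hlam : V.lam = U.lam) (hentry : V.entry = U.entry) :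
    V.content = U.content := by
  funext a
  simp only [content, box, hlam, hentry]

theorem kappa_eq_of_barred_iff (hlam : V.lam = U.lam) (hentry : V.entry = U.entry) {m : ℕ}
    (hm : m ∈ V.barred ↔ m ∈ U.barred) :
    V.kappa m = U.kappa m := by
  rw [kappa, kappa, content_eq_of_filling_eq hlam hentry, if_congr hm rfl rfl]

theorem kappa_eq_neg_of_barred (hlam : V.lam = U.lam) (hentry : V.entry = U.entry) {m : ℕ}
    (hV : m ∈ V.barred) (hU : m ∉ U.barred) :
    V.kappa m = -U.kappa m := by
  rw [kappa, kappa, content_eq_of_filling_eq hlam hentry, if_pos hV, if_neg hU]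
  ring

end SBT

theorem statement5_general (n : ℕ) (U U' : SBT n) (a : ℕ)
    (hbar : a ∉ U.barred)
    (hlam : U'.lam = U.lam) (hentry : U'.entry = U.entry)
    (hbar' : U'.barred = insert a U.barred) :
    eU U * cS n a = cS n a * eU U' ∧
    eU U' * cS n a = cS n a * eU U ∧
    (∀ d i : ℕ, (i, i) ∈ cells U.lam → U.entry (i, i) = d → eU U * cS n d = cS n d * eU U) := by
  have hshape := SBT.shapeAt_eq_of_filling_eq hlam hentry
  have hkappa (m : ℕ) (hm : m ≠ a) : U'.kappa m = U.kappa m :=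
    SBT.kappa_eq_of_barred_iff hlam hentry (by simp [hbar', hm])
  have hkappa_a : U'.kappa a = -U.kappa a :=
    SBT.kappa_eq_neg_of_barred hlam hentry (hbar' ▸ Set.mem_insert a U.barred) hbar
  refine ⟨(semiconjBy_cS_eAux n hshape hkappa hkappa_a n).eq.symm,
    (semiconjBy_cS_eAux n (fun k => (hshape k).symm) (fun m hm => (hkappa m hm).symm)
      (by rw [hkappa_a, neg_neg]) n).eq.symm, fun d i hi hd => ?_⟩
  have hzero := U.kappa_eq_zero_of_diag hi hd
  exact (semiconjBy_cS_eAux n (fun _ => rfl) (fun _ _ => rfl)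
    (by rw [hzero, neg_zero]) n).eq.symm

/-- If `a` is an unbarred (non-diagonal) entry of `U` and `U'` is obtained from `U`
by barring `a`, then `e_U c_a = c_a e_{U'}` and `e_{U'} c_a = c_a e_U`; moreover `e_U`
commutes with `c_d` for every diagonal entry `d` of `U`. -/
theorem statement5 (n : ℕ) (hn : 1 ≤ n) (U U' : SBT n) (a : ℕ) (ha1 : 1 ≤ a) (ha2 : a ≤ n)
    (hbar : a ∉ U.barred)
    (hlam : U'.lam = U.lam) (hentry : U'.entry = U.entry)
    (hbar' : U'.barred = insert a U.barred) :
    eU U * cS n a = cS n a * eU U' ∧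
    eU U' * cS n a = cS n a * eU U ∧
    (∀ d i : ℕ, (i, i) ∈ cells U.lam → U.entry (i, i) = d → eU U * cS n d = cS n d * eU U) :=
  statement5_general n U U' a hbar hlam hentry hbar'
end
end
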